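/- arXiv:math/0003154 — 7 statements merged into one kernel-verified Lean document; each statement's English description precedes it below -/
import Mathlib

section
/- Let (X, C, li*) be a Li*-space, i.e., C is a class of sequences in X with a limit operator li* : C → X satisfying (L1) constant sequences converge to their value, (L2) subsequences of convergent sequences converge to the same limit, and (L3) if every subsequence of (x_n) has a further subsequence in C with li*-limit x, then (x_n) ∈ C with li*-limit x. Define a topology τ on X whose closed sets are exactly the li*-sequentially closed sets (A is li*-sequentially closed if li* x_n ∈ A whenever (x_n) ∈ C is contained in A). Then this family of closed sets indeed defines a topology, and a sequence (x_n) converges to x in τ if and only if (x_n) ∈ C with li* x_n = x. -/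
open Filter Topology
noncomputable section

section LiStarAux

variable {X : Type*} (C : Set (ℕ → X)) (li : (ℕ → X) → X)

/-- Extraction of a strictly monotone subsequence from an infinite set of indices. -/
private lemma liStar_extract {P : ℕ → Prop} (h : {n | P n}.Infinite) :
    ∃ φ : ℕ → ℕ, StrictMono φ ∧ ∀ n, P (φ n) :=
  Filter.extraction_of_frequently_atTop (Nat.frequently_atTop_iff_infinite.2 h)

/-- The sequential topology: a set is open iff every `C`-sequence whose limit lies in it
is eventually in it. -/
def liStarTop : TopologicalSpace X where
  IsOpen U := ∀ v ∈ C, li v ∈ U → ∃ N, ∀ n, N ≤ n → v n ∈ U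
  isOpen_univ := fun _ _ _ => ⟨0, fun _ _ => trivial⟩
  isOpen_inter := by
    intro U V hU hV v hv hm
    obtain ⟨N₁, h₁⟩ := hU v hv hm.1
    obtain ⟨N₂, h₂⟩ := hV v hv hm.2
    exact ⟨max N₁ N₂, fun n hn =>
      ⟨h₁ n (le_trans (le_max_left _ _) hn), h₂ n (le_trans (le_max_right _ _) hn)⟩⟩
  isOpen_sUnion := by
    intro S hS v hv hm
    obtain ⟨U, hU, hxU⟩ := hm
    obtain ⟨N, hN⟩ := hS U hU v hv hxU
    exact ⟨N, fun n hn => ⟨U, hU, hN n hn⟩⟩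

variable (L1 : ∀ x : X, (fun _ => x) ∈ C ∧ li (fun _ => x) = x)
variable (L2 : ∀ s ∈ C, ∀ φ : ℕ → ℕ, StrictMono φ → s ∘ φ ∈ C ∧ li (s ∘ φ) = li s)

include L1 L2 in
/-- If a `C`-sequence takes a value infinitely often, its limit is that value. -/
private lemma liStar_lim_const {v : ℕ → X} {c : X} (hv : v ∈ C)
    (h : {n | v n = c}.Infinite) : li v = c := by
  obtain ⟨φ, hφ, hval⟩ := liStar_extract h
  have h2 := L2 v hv φ hφ
  have hconst : v ∘ φ = fun _ => c := funext fun i => hval i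
  rw [hconst] at h2
  rw [← h2.2, (L1 c).2]

include L1 L2 in
/-- Pigeonhole: a `C`-sequence with values in the range of `u₀` either has limit in the
range of `u₀`, or its limit is the limit of a genuine subsequence of `u₀` lying in `C`. -/
private lemma liStar_range_case {u₀ v : ℕ → X} (hv : v ∈ C)
    (h : ∀ n, v n ∈ Set.range u₀) :
    li v ∈ Set.range u₀ ∨
      ∃ θ : ℕ → ℕ, StrictMono θ ∧ u₀ ∘ θ ∈ C ∧ li (u₀ ∘ θ) = li v := by
  choose k hk using h
  by_cases hrep : ∃ m, {n | k n = m}.Infinite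
  · -- some index repeats infinitely often: constant value case
    obtain ⟨m, hm⟩ := hrep
    left
    have : {n | v n = u₀ m}.Infinite := by
      apply hm.mono
      intro n hn
      simp only [Set.mem_setOf_eq] at hn ⊢
      rw [← hk n, hn]
    exact ⟨m, (liStar_lim_const C li L1 L2 hv this).symm⟩
  · -- all index fibers finite: extract a strictly monotone index subsequence
    push_neg at hrep
    have hfin : ∀ a : ℕ, ∃ n, a < n ∧ k a < k n := by
      intro a
      have h1 : {n | k n ≤ k a}.Finite := by
        have hsub : {n | k n ≤ k a} ⊆ ⋃ m ∈ Set.Iic (k a), {n | k n = m} := by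
          intro n hn
          exact Set.mem_biUnion hn rfl
        exact (Set.Finite.biUnion (Set.finite_Iic _) (fun m _ => hrep m)).subset hsub
      have h2 : ({n | k n ≤ k a} ∪ Set.Iic a).Finite := h1.union (Set.finite_Iic a)
      obtain ⟨n, hn⟩ := h2.infinite_compl.nonempty
      simp only [Set.mem_compl_iff, Set.mem_union, Set.mem_setOf_eq, Set.mem_Iic,
        not_or, not_le] at hn
      exact ⟨n, hn.2, hn.1⟩
    obtain ⟨f, hf⟩ : ∃ f : ℕ → ℕ, ∀ i, f i < f (i + 1) ∧ k (f i) < k (f (i + 1)) :=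
      ⟨fun i => Nat.rec 0 (fun _ prev => (hfin prev).choose) i,
        fun i => (hfin _).choose_spec⟩
    have hfmono : StrictMono f := strictMono_nat_of_lt_succ fun n => (hf n).1
    have hkfmono : StrictMono (k ∘ f) := strictMono_nat_of_lt_succ fun n => (hf n).2
    right
    refine ⟨k ∘ f, hkfmono, ?_⟩
    have h2 := L2 v hv f hfmono
    have heq : v ∘ f = u₀ ∘ (k ∘ f) := funext fun i => (hk (f i)).symm
    rw [heq] at h2
    exact h2

include L2 in
/-- The complement of a sequentially closed set is open in the sequential topology. -/
private lemma liStar_isOpen_compl {A : Set X}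
    (hA : ∀ v ∈ C, (∀ n, v n ∈ A) → li v ∈ A) :
    (liStarTop C li).IsOpen Aᶜ := by
  intro v hv hm
  by_contra hno
  push_neg at hno
  have hfreq : {n | v n ∈ A}.Infinite := by
    rw [← Nat.frequently_atTop_iff_infinite, frequently_atTop]
    intro N
    obtain ⟨n, hn, hmem⟩ := hno N
    exact ⟨n, hn, by simpa using hmem⟩
  obtain ⟨φ, hφ, hval⟩ := liStar_extract hfreq
  have h2 := L2 v hv φ hφ
  have : li (v ∘ φ) ∈ A := hA _ h2.1 hval
  rw [h2.2] at this
  exact hm this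

include L1 L2 in
/-- Key lemma: a sequence converging topologically to `x` has a subsequence in `C`
with `li`-limit `x`. -/
private lemma liStar_key {u : ℕ → X} {x : X}
    (hu : Tendsto u atTop (@nhds X (liStarTop C li) x)) :
    ∃ ψ : ℕ → ℕ, StrictMono ψ ∧ u ∘ ψ ∈ C ∧ li (u ∘ ψ) = x := by
  by_cases hinf : {n | u n = x}.Infinite
  · obtain ⟨ψ, hψ, hval⟩ := liStar_extract hinf
    have hconst : u ∘ ψ = fun _ => x := funext fun i => hval i
    exact ⟨ψ, hψ, by rw [hconst]; exact ⟨(L1 x).1, (L1 x).2⟩⟩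
  · rw [Set.not_infinite] at hinf
    -- all terms beyond N differ from x
    obtain ⟨N, hN⟩ : ∃ N, ∀ n, N ≤ n → u n ≠ x := by
      rcases hinf.bddAbove with ⟨M, hM⟩
      refine ⟨M + 1, fun n hn hcon => ?_⟩
      have := hM hcon
      omega
    set w : ℕ → X := fun n => u (n + N) with hw
    have hmonoshift : StrictMono (fun n : ℕ => n + N) :=
      fun a b h => Nat.add_lt_add_right h N
    have hwt : Tendsto w atTop (@nhds X (liStarTop C li) x) :=
      hu.comp hmonoshift.tendsto_atTop
    have hwx : ∀ n, w n ≠ x := fun n => hN (n + N) (Nat.le_add_left N n)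
    by_contra hcon
    push_neg at hcon
    have hw_not : ∀ χ : ℕ → ℕ, StrictMono χ → w ∘ χ ∈ C → li (w ∘ χ) ≠ x := by
      intro χ hχ hmem
      have heq : w ∘ χ = u ∘ (fun n => χ n + N) := funext fun i => rfl
      have hmono : StrictMono (fun n => χ n + N) :=
        fun a b h => Nat.add_lt_add_right (hχ h) N
      rw [heq] at hmem ⊢
      exact hcon _ hmono hmem
    -- a seq-closed set F with x ∉ F but w frequently in F — contradicting hwt
    have main : ∃ F : Set X, (∀ v ∈ C, (∀ n, v n ∈ F) → li v ∈ F) ∧ x ∉ F ∧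
        ∀ N', ∃ n, N' ≤ n ∧ w n ∈ F := by
      by_cases hC : ∃ χ : ℕ → ℕ, StrictMono χ ∧ w ∘ χ ∈ C
      · obtain ⟨χ₀, hχ₀, hmem₀⟩ := hC
        set u₀ : ℕ → X := w ∘ χ₀ with hu₀
        set y₀ : X := li u₀ with hy₀
        have hy₀x : y₀ ≠ x := hw_not χ₀ hχ₀ hmem₀
        refine ⟨Set.range u₀ ∪ {y₀}, ?_, ?_, ?_⟩
        · intro v hv hvF
          by_cases hvy : {n | v n = y₀}.Infinite
          · right
            exact liStar_lim_const C li L1 L2 hv hvy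
          · rw [Set.not_infinite] at hvy
            obtain ⟨M, hM⟩ : ∃ M, ∀ n, M ≤ n → v n ≠ y₀ := by
              rcases hvy.bddAbove with ⟨M, hM⟩
              refine ⟨M + 1, fun n hn hcon2 => ?_⟩
              have := hM hcon2
              omega
            have hshift : StrictMono (fun n : ℕ => n + M) :=
              fun a b h => Nat.add_lt_add_right h M
            have h2 := L2 v hv _ hshift
            set v' : ℕ → X := v ∘ (fun n : ℕ => n + M) with hv'
            have hran : ∀ n, v' n ∈ Set.range u₀ := by
              intro n
              rcases hvF (n + M) with h | h
              · exact h
              · exact absurd h (hM (n + M) (Nat.le_add_left M n))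
            rcases liStar_range_case C li L1 L2 h2.1 hran with h | ⟨θ, hθ, hθC, hθli⟩
            · left; rwa [h2.2] at h
            · right
              have h3 := L2 u₀ hmem₀ θ hθ
              have : li v' = y₀ := by rw [← hθli, h3.2]
              rw [← h2.2, this]
              exact rfl
        · rintro (⟨n, hn⟩ | h)
          · exact hwx (χ₀ n) hn
          · exact hy₀x (Set.mem_singleton_iff.mp h).symm
        · intro N'
          exact ⟨χ₀ N', hχ₀.le_apply, Or.inl ⟨N', rfl⟩⟩
      · refine ⟨Set.range w, ?_, ?_, fun N' => ⟨N', le_refl _, ⟨N', rfl⟩⟩⟩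
        · intro v hv hvF
          rcases liStar_range_case C li L1 L2 hv hvF with h | ⟨θ, hθ, hθC, _⟩
          · exact h
          · exact absurd ⟨θ, hθ, hθC⟩ hC
        · rintro ⟨n, hn⟩
          exact hwx n hn
    obtain ⟨F, hFseq, hxF, hFfreq⟩ := main
    letI : TopologicalSpace X := liStarTop C li
    have hopen : IsOpen Fᶜ := liStar_isOpen_compl C li L2 hFseq
    have hev : w ⁻¹' Fᶜ ∈ atTop := hwt (hopen.mem_nhds hxF)
    obtain ⟨N', hN'⟩ := mem_atTop_sets.mp hev
    obtain ⟨n, hn, hnF⟩ := hFfreq N'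
    exact (hN' n hn) hnF

end LiStarAux

/-- The sequential topology induced by a limit operator on a `Li*`-space:
the closed sets are exactly the `li*`-sequentially closed sets, and the
convergent sequences are exactly the sequences of the convergence class `C`,
converging to their `li*`-limit. -/
theorem liStar_space_sequential_topology {X : Type*} (C : Set (ℕ → X)) (li : (ℕ → X) → X)
    (L1 : ∀ x : X, (fun _ => x) ∈ C ∧ li (fun _ => x) = x)
    (L2 : ∀ s ∈ C, ∀ φ : ℕ → ℕ, StrictMono φ → s ∘ φ ∈ C ∧ li (s ∘ φ) = li s)
    (L3 : ∀ (s : ℕ → X) (x : X),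
      (∀ φ : ℕ → ℕ, StrictMono φ →
        ∃ ψ : ℕ → ℕ, StrictMono ψ ∧ s ∘ φ ∘ ψ ∈ C ∧ li (s ∘ φ ∘ ψ) = x) →
      s ∈ C ∧ li s = x) :
    ∃ τ : TopologicalSpace X,
      (∀ A : Set X, IsClosed[τ] A ↔ ∀ s ∈ C, (∀ n, s n ∈ A) → li s ∈ A) ∧
      (∀ (s : ℕ → X) (x : X),
        Tendsto s atTop (@nhds X τ x) ↔ s ∈ C ∧ li s = x) := by
  refine ⟨liStarTop C li, fun A => ⟨?_, ?_⟩, fun s x => ⟨?_, ?_⟩⟩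
  · -- closed → seq-closed
    intro hA v hv hval
    have hopen : (liStarTop C li).IsOpen Aᶜ := hA.isOpen_compl
    by_contra hx
    obtain ⟨N, hN⟩ := hopen v hv hx
    exact (hN N (le_refl N)) (hval N)
  · -- seq-closed → closed
    intro hA
    exact @IsClosed.mk X (liStarTop C li) A (liStar_isOpen_compl C li L2 hA)
  · -- topological convergence → C-convergence (uses L3)
    intro h
    refine L3 s x ?_
    intro φ hφ
    have hu : Tendsto (s ∘ φ) atTop (@nhds X (liStarTop C li) x) :=
      h.comp hφ.tendsto_atTop
    obtain ⟨ψ, hψ, hmem, hli⟩ := liStar_key C li L1 L2 hu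
    exact ⟨ψ, hψ, hmem, hli⟩
  · -- C-convergence → topological convergence
    rintro ⟨hs, hli⟩
    letI : TopologicalSpace X := liStarTop C li
    refine tendsto_nhds.mpr ?_
    intro U hU hxU
    obtain ⟨N, hN⟩ := hU s hs (by rwa [hli])
    exact mem_atTop_sets.mpr ⟨N, fun n hn => hN n hn⟩
end
end

section
/- Let X be a Banach space with a projection P : X → X satisfying ‖x‖ = ‖Px‖ + ‖x − Px‖ for all x (an L-projection). Then any contractive projection Q on X with ker Q = ker P satisfies Q = P. -/
open Filter Topology
noncomputable section

/-- A contractive projection with the same kernel as an L-projection coincides with it. -/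
theorem contractive_projection_eq_LProjection {X : Type*} [NormedAddCommGroup X]
    [NormedSpace ℝ X] [CompleteSpace X] (P Q : X →L[ℝ] X)
    (hPidem : ∀ v, P (P v) = P v)
    (hPL : ∀ v, ‖v‖ = ‖P v‖ + ‖v - P v‖)
    (hQidem : ∀ v, Q (Q v) = Q v)
    (hQcontr : ‖Q‖ ≤ 1)
    (hker : ∀ v, P v = 0 ↔ Q v = 0) :
    Q = P := by
  ext x
  -- Q x = Q (P x)
  have h1 : Q x = Q (P x) := by
    have hk : P (x - P x) = 0 := by simp [map_sub, hPidem]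
    have := (hker _).mp hk
    rw [map_sub, sub_eq_zero] at this
    exact this
  -- P x = P (Q (P x))
  have h2 : P x = P (Q (P x)) := by
    have hq : Q (P x - Q (P x)) = 0 := by simp [map_sub, hQidem]
    have := (hker _).mpr hq
    rw [map_sub, sub_eq_zero, hPidem] at this
    exact this
  -- L-condition applied to Q (P x)
  have h3 : ‖Q (P x)‖ = ‖P x‖ + ‖Q (P x) - P x‖ := by
    have := hPL (Q (P x))
    rw [← h2] at this
    exact this
  have h4 : ‖Q (P x)‖ ≤ ‖P x‖ := by
    calc ‖Q (P x)‖ ≤ ‖Q‖ * ‖P x‖ := Q.le_opNorm _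
    _ ≤ 1 * ‖P x‖ := by
        exact mul_le_mul_of_nonneg_right hQcontr (norm_nonneg _)
    _ = ‖P x‖ := one_mul _
  have h5 : ‖Q (P x) - P x‖ ≤ 0 := by linarith
  have h6 : Q (P x) = P x := by
    have := le_antisymm h5 (norm_nonneg _)
    rwa [norm_eq_zero, sub_eq_zero] at this
  rw [h1, h6]
end
end

section
/- Let X be a Banach space, (x_n) a normalized sequence spanning l^1 almost isometrically, and (x'_n) the biorthogonal functionals on [x_n]. Then (x'_n) spans c_0 almost isometrically: there is a null sequence (δ_m) in [0,1) with (1−δ_m) max_{m≤n≤m'}|α_n| ≤ ‖Σ_{n=m}^{m'} α_n x'_n‖ ≤ (1−δ_m)^{-1} max_{m≤n≤m'}|α_n| for all m ≤ m' and scalars α_n. -/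
/-! Write `ρ m` (`tailMassSup x m`) for the supremum of the tail mass `∑_{n ≥ m} |cₙ|` over the
finitely supported `y = ∑ cₙ xₙ` with `‖y‖ ≤ 1`. By density of the span,
`‖∑_{n=m}^{m'} αₙ x'ₙ‖ ≤ ρ m · max |αₙ|`, and evaluation at `xₙ` gives the lower bound, so
`δ' m = 1 - (ρ m)⁻¹` works as soon as `ρ m → 1`.

The sequence `ρ` decreases to some `Γ ≥ 1`. Fix `m`. The coefficients below `m` of almost extremal
vectors lie in a compact set, so there are two such vectors `y`, `y'` with almost equal heads, where
`y'` carries tail mass close to `Γ` beyond the support of `y`. Then `y - y'` has norm at most `2`,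
a negligible head and tail mass from `m` at least about `3Γ - ρ m`, so the lower `ℓ¹`-estimate
gives `(1 - δ m)(3Γ - ρ m) ≤ 2`. Letting `m → ∞` yields `2Γ ≤ 2`. -/

open Filter Topology
noncomputable section

/-- A normalized sequence `x` spans `ℓ¹` almost isometrically: there is a null
sequence `δ` in `[0,1)` with
`(1-δ m) ∑_{m ≤ n ≤ m'} |α n| ≤ ‖∑_{m ≤ n ≤ m'} α n • x n‖ ≤ ∑_{m ≤ n ≤ m'} |α n|`. -/
def SpansL1Alm {X : Type*} [NormedAddCommGroup X] [NormedSpace ℝ X] (x : ℕ → X) : Prop :=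
  ∃ δ : ℕ → ℝ, (∀ n, δ n ∈ Set.Ico (0 : ℝ) 1) ∧ Tendsto δ atTop (𝓝 0) ∧
    ∀ (m m' : ℕ) (α : ℕ → ℝ),
      (1 - δ m) * ∑ n ∈ Finset.Icc m m', |α n| ≤ ‖∑ n ∈ Finset.Icc m m', α n • x n‖ ∧
      ‖∑ n ∈ Finset.Icc m m', α n • x n‖ ≤ ∑ n ∈ Finset.Icc m m', |α n|

open Finset

def tailMass (c : ℕ →₀ ℝ) (m : ℕ) : ℝ := ∑ n ∈ c.support with m ≤ n, |c n|

section

variable {c d : ℕ →₀ ℝ} {m K : ℕ}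

lemma tailMass_nonneg (c : ℕ →₀ ℝ) (m : ℕ) : 0 ≤ tailMass c m :=
  sum_nonneg fun _ _ => abs_nonneg _

lemma tailMass_antitone (c : ℕ →₀ ℝ) : Antitone (tailMass c) := fun _ _ h =>
  sum_le_sum_of_subset_of_nonneg
    (fun _ hn => mem_filter.2 ⟨(mem_filter.1 hn).1, h.trans (mem_filter.1 hn).2⟩)
    fun _ _ _ => abs_nonneg _

lemma abs_le_tailMass (c : ℕ →₀ ℝ) (n : ℕ) : |c n| ≤ tailMass c n := by
  by_cases hn : n ∈ c.support
  · exact single_le_sum (f := fun n => |c n|) (fun _ _ => abs_nonneg _)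
      (mem_filter.2 ⟨hn, le_rfl⟩)
  · rw [Finsupp.notMem_support_iff.1 hn, abs_zero]
    exact tailMass_nonneg c n

lemma tailMass_eq_sum_Ico (h : c.support ⊆ range K) (m : ℕ) :
    tailMass c m = ∑ n ∈ Ico m K, |c n| := by
  have hsupp : {n ∈ c.support | m ≤ n} ⊆ Ico m K := fun n hn => by
    simp only [mem_filter] at hn
    exact mem_Ico.2 ⟨hn.2, mem_range.1 (h hn.1)⟩
  refine sum_subset hsupp fun n hn hnf => ?_
  rw [Finsupp.notMem_support_iff.1 fun hs => hnf (mem_filter.2 ⟨hs, (mem_Ico.1 hn).1⟩),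
    abs_zero]

lemma tailMass_smul (a : ℝ) (c : ℕ →₀ ℝ) (m : ℕ) :
    tailMass (a • c) m = |a| * tailMass c m := by
  obtain ⟨K, hK⟩ := c.support.exists_nat_subset_range
  rw [tailMass_eq_sum_Ico hK, tailMass_eq_sum_Ico (Finsupp.support_smul.trans hK), mul_sum]
  simp only [Finsupp.coe_smul, Pi.smul_apply, smul_eq_mul, abs_mul]

lemma sum_Icc_abs_le_tailMass (c : ℕ →₀ ℝ) (m m' : ℕ) :
    ∑ n ∈ Icc m m', |c n| ≤ tailMass c m := by
  obtain ⟨K, hK⟩ := c.support.exists_nat_subset_range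
  rw [tailMass_eq_sum_Ico (hK.trans (range_mono (le_max_left K (m' + 1)))) m]
  exact sum_le_sum_of_subset_of_nonneg (Icc_subset_Ico_right (by omega))
    fun _ _ _ => abs_nonneg _

/-- If `c` lives below `K`, the part of `d` beyond `K` adds to the tail mass of `c - d` instead of
cancelling against `c`. -/
lemma tailMass_add_two_mul_sub_le_tailMass_sub (hc : c.support ⊆ range K) (hm : m ≤ K) :
    tailMass c m + 2 * tailMass d K - tailMass d m ≤ tailMass (c - d) m := by
  obtain ⟨L, hL⟩ := (c.support ∪ d.support).exists_nat_subset_range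
  have hKL : K ≤ max L K := le_max_right L K
  have hd : d.support ⊆ range (max L K) :=
    (subset_union_right.trans hL).trans (range_mono (le_max_left L K))
  have hcd : (c - d).support ⊆ range (max L K) :=
    Finsupp.support_sub.trans (union_subset (hc.trans (range_mono hKL)) hd)
  have hcK : ∀ n ∈ Ico K (max L K), |(c - d) n| = |d n| := fun n hn => by
    rw [Finsupp.coe_sub, Pi.sub_apply, Finsupp.notMem_support_iff.1 fun h => ?_, zero_sub,
      abs_neg]
    exact (mem_Ico.1 hn).1.not_gt (mem_range.1 (hc h))
  have hhead :
      ∑ n ∈ Ico m K, |c n| - ∑ n ∈ Ico m K, |d n| ≤ ∑ n ∈ Ico m K, |(c - d) n| := by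
    rw [← sum_sub_distrib]
    exact sum_le_sum fun n _ => abs_sub_abs_le_abs_sub _ _
  rw [tailMass_eq_sum_Ico hc, tailMass_eq_sum_Ico hd, tailMass_eq_sum_Ico hd,
    tailMass_eq_sum_Ico hcd, ← sum_Ico_consecutive _ hm hKL,
    ← sum_Ico_consecutive (fun n => |(c - d) n|) hm hKL, sum_congr rfl hcK]
  linarith

end

lemma exists_ge_frequently_dist_lt {E : Type*} [PseudoMetricSpace E] [ProperSpace E]
    {h : ℕ → E} (hb : Bornology.IsBounded (Set.range h)) {r : ℝ} (hr : 0 < r) (N : ℕ) :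
    ∃ i ≥ N, ∃ᶠ j in atTop, dist (h i) (h j) < r := by
  obtain ⟨a, -, φ, hφ, hlim⟩ := tendsto_subseq_of_bounded hb (Set.mem_range_self ·)
  obtain ⟨J, hJ⟩ := Metric.tendsto_atTop.1 hlim (r / 2) (half_pos hr)
  refine ⟨φ (max N J), (le_max_left N J).trans (hφ.id_le _), frequently_atTop.2 fun M =>
    ⟨φ (max M J), (le_max_left M J).trans (hφ.id_le _), ?_⟩⟩
  calc dist (h (φ (max N J))) (h (φ (max M J)))
      ≤ dist (h (φ (max N J))) a + dist (h (φ (max M J))) a := dist_triangle_right _ _ _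
    _ < r / 2 + r / 2 := add_lt_add (hJ _ (le_max_right _ _)) (hJ _ (le_max_right _ _))
    _ = r := add_halves r

theorem ContinuousLinearMap.opNorm_le_of_dense {𝕜 E F : Type*} [NontriviallyNormedField 𝕜]
    [SeminormedAddCommGroup E] [SeminormedAddCommGroup F] [NormedSpace 𝕜 E] [NormedSpace 𝕜 F]
    (f : E →L[𝕜] F) {s : Set E} (hs : Dense s) {D : ℝ} (hD : 0 ≤ D)
    (h : ∀ y ∈ s, ‖f y‖ ≤ D * ‖y‖) : ‖f‖ ≤ D :=
  f.opNorm_le_bound hD <| hs.induction h (isClosed_le (by fun_prop) (by fun_prop))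

section

variable {X : Type*} [NormedAddCommGroup X] [NormedSpace ℝ X] {x : ℕ → X}

lemma Finsupp.linearCombination_eq_sum_range {c : ℕ →₀ ℝ} {K : ℕ}
    (h : c.support ⊆ range K) :
    Finsupp.linearCombination ℝ x c = ∑ n ∈ range K, c n • x n := by
  rw [Finsupp.linearCombination_apply]
  exact Finsupp.sum_of_support_subset c h _ fun _ _ => zero_smul ℝ _

lemma norm_sum_smul_le_sum_abs (hx1 : ∀ n, ‖x n‖ ≤ 1) (s : Finset ℕ) (c : ℕ → ℝ) :
    ‖∑ n ∈ s, c n • x n‖ ≤ ∑ n ∈ s, |c n| :=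
  (norm_sum_le _ _).trans <| sum_le_sum fun n _ => by
    simpa [norm_smul] using mul_le_mul_of_nonneg_left (hx1 n) (abs_nonneg (c n))

lemma SpansL1Alm.norm_le_one (hx : SpansL1Alm x) (n : ℕ) : ‖x n‖ ≤ 1 := by
  obtain ⟨δ, -, -, hδ⟩ := hx
  simpa using (hδ n n 1).2

lemma mul_tailMass_le {δ : ℕ → ℝ} (hx1 : ∀ n, ‖x n‖ ≤ 1)
    (hlow : ∀ (m m' : ℕ) (α : ℕ → ℝ),
      (1 - δ m) * ∑ n ∈ Icc m m', |α n| ≤ ‖∑ n ∈ Icc m m', α n • x n‖)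
    (c : ℕ →₀ ℝ) (m : ℕ) :
    (1 - δ m) * tailMass c m ≤ ‖Finsupp.linearCombination ℝ x c‖ + ∑ n ∈ range m, |c n| := by
  obtain ⟨K, hK⟩ := c.support.exists_nat_subset_range
  have hK' : c.support ⊆ range (max m K + 1) := hK.trans (range_mono (by omega))
  set head := ∑ n ∈ range m, c n • x n
  set tail := ∑ n ∈ Ico m (max m K + 1), c n • x n
  have hsplit : Finsupp.linearCombination ℝ x c = head + tail := by
    rw [Finsupp.linearCombination_eq_sum_range hK', sum_range_add_sum_Ico _ (by omega)]
  calc (1 - δ m) * tailMass c m ≤ ‖tail‖ := by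
        rw [tailMass_eq_sum_Ico hK', Ico_add_one_right_eq_Icc]
        exact hlow _ _ _
    _ = ‖(head + tail) - head‖ := by rw [add_sub_cancel_left]
    _ ≤ ‖head + tail‖ + ‖head‖ := norm_sub_le _ _
    _ ≤ _ := by
        rw [← hsplit]
        gcongr
        exact norm_sum_smul_le_sum_abs hx1 _ _

lemma SpansL1Alm.exists_tailMass_zero_le (hx : SpansL1Alm x) :
    ∃ C, ∀ c : ℕ →₀ ℝ, ‖Finsupp.linearCombination ℝ x c‖ ≤ 1 → tailMass c 0 ≤ C := by
  have hx1 := hx.norm_le_one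
  obtain ⟨δ, hδ, -, hδb⟩ := hx
  refine ⟨(1 - δ 0)⁻¹, fun c hc => ?_⟩
  have h := mul_tailMass_le hx1 (fun m m' α => (hδb m m' α).1) c 0
  rw [range_zero, sum_empty, add_zero] at h
  rw [← one_div]
  exact (le_div_iff₀' (sub_pos.2 (hδ 0).2)).2 (h.trans hc)

def tailMassSup (x : ℕ → X) (m : ℕ) : ℝ :=
  ⨆ c : {c : ℕ →₀ ℝ // ‖Finsupp.linearCombination ℝ x c‖ ≤ 1}, tailMass c.1 m

namespace SpansL1Alm

variable (hx : SpansL1Alm x)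
include hx

lemma bddAbove_tailMass (m : ℕ) :
    BddAbove (Set.range fun c : {c : ℕ →₀ ℝ // ‖Finsupp.linearCombination ℝ x c‖ ≤ 1} =>
      tailMass c.1 m) := by
  obtain ⟨C, hC⟩ := hx.exists_tailMass_zero_le
  refine ⟨C, ?_⟩
  rintro _ ⟨c, rfl⟩
  exact (tailMass_antitone c.1 (Nat.zero_le m)).trans (hC c.1 c.2)

lemma tailMass_le_tailMassSup {c : ℕ →₀ ℝ} (hc : ‖Finsupp.linearCombination ℝ x c‖ ≤ 1)
    (m : ℕ) : tailMass c m ≤ tailMassSup x m :=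
  le_ciSup (hx.bddAbove_tailMass m) ⟨c, hc⟩

lemma one_le_tailMassSup (m : ℕ) : 1 ≤ tailMassSup x m := by
  have h := hx.tailMass_le_tailMassSup (c := Finsupp.single m 1)
    (by simpa using hx.norm_le_one m) m
  simpa [tailMass, filter_singleton] using h

lemma antitone_tailMassSup : Antitone (tailMassSup x) := fun _ _ h =>
  ciSup_mono (hx.bddAbove_tailMass _) fun c => tailMass_antitone c.1 h

lemma tailMass_le_tailMassSup_mul (c : ℕ →₀ ℝ) (m : ℕ) :
    tailMass c m ≤ tailMassSup x m * ‖Finsupp.linearCombination ℝ x c‖ := by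
  have hρ : 0 < tailMassSup x m := zero_lt_one.trans_le (hx.one_le_tailMassSup m)
  rw [← div_le_iff₀' hρ]
  refine le_of_forall_gt_imp_ge_of_dense fun t ht => ?_
  have ht0 : 0 < t := (norm_nonneg _).trans_lt ht
  have h := hx.tailMass_le_tailMassSup (c := t⁻¹ • c) ?_ m
  · rw [tailMass_smul, abs_of_pos (inv_pos.2 ht0), inv_mul_le_iff₀ ht0] at h
    rwa [div_le_iff₀ hρ]
  · rw [map_smul, norm_smul, Real.norm_of_nonneg (inv_nonneg.2 ht0.le), inv_mul_le_iff₀ ht0,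
      mul_one]
    exact ht.le

end SpansL1Alm

lemma exists_lt_tailMass_of_lt_tailMassSup {m : ℕ} {r : ℝ} (h : r < tailMassSup x m) :
    ∃ c : ℕ →₀ ℝ, ‖Finsupp.linearCombination ℝ x c‖ ≤ 1 ∧ r < tailMass c m := by
  have : Nonempty {c : ℕ →₀ ℝ // ‖Finsupp.linearCombination ℝ x c‖ ≤ 1} := ⟨⟨0, by simp⟩⟩
  obtain ⟨⟨c, hc⟩, hr⟩ := exists_lt_of_lt_ciSup h
  exact ⟨c, hc, hr⟩

lemma SpansL1Alm.exists_close_heads (hx : SpansL1Alm x) {r : ℝ}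
    (hr : ∀ j, r < tailMassSup x j) (m : ℕ) {ε : ℝ} (hε : 0 < ε) :
    ∃ (c d : ℕ →₀ ℝ) (K : ℕ), ‖Finsupp.linearCombination ℝ x c‖ ≤ 1 ∧
      ‖Finsupp.linearCombination ℝ x d‖ ≤ 1 ∧ c.support ⊆ range K ∧ m ≤ K ∧
      r < tailMass c m ∧ r < tailMass d K ∧ ∑ n ∈ range m, |c n - d n| ≤ ε := by
  choose c hc hcr using fun j => exists_lt_tailMass_of_lt_tailMassSup (hr j)
  obtain ⟨C, hC⟩ := hx.exists_tailMass_zero_le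
  have hb : Bornology.IsBounded (Set.range fun j (i : Fin m) => c j i) := by
    refine isBounded_iff_forall_norm_le.2 ⟨C, ?_⟩
    rintro _ ⟨j, rfl⟩
    refine pi_norm_le_iff_of_nonneg ((tailMass_nonneg _ 0).trans (hC _ (hc j))) |>.2 fun i => ?_
    exact (abs_le_tailMass _ _).trans <|
      (tailMass_antitone _ (Nat.zero_le _)).trans (hC _ (hc j))
  obtain ⟨i, hi, hfreq⟩ := exists_ge_frequently_dist_lt hb (r := ε / (m + 1)) (by positivity) m
  obtain ⟨K, hK⟩ := (c i).support.exists_nat_subset_range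
  obtain ⟨j, hj, hdist⟩ := frequently_atTop.1 hfreq (max K m)
  refine ⟨c i, c j, max K m, hc i, hc j, hK.trans (range_mono (le_max_left K m)),
    le_max_right K m, (hcr i).trans_le (tailMass_antitone _ hi),
    (hcr j).trans_le (tailMass_antitone _ hj), ?_⟩
  calc ∑ n ∈ range m, |c i n - c j n| ≤ ∑ _n ∈ range m, ε / (m + 1) := by
        refine sum_le_sum fun n hn => ?_
        rw [← Real.dist_eq]
        exact (dist_le_pi_dist (fun k : Fin m => c i k) (fun k => c j k)
          ⟨n, mem_range.1 hn⟩).trans hdist.le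
    _ = m / (m + 1) * ε := by rw [sum_const, card_range, nsmul_eq_mul]; ring
    _ ≤ ε := mul_le_of_le_one_left hε.le <| (div_le_one (by positivity)).2 (by linarith)

lemma SpansL1Alm.mul_three_mul_sub_tailMassSup_le (hx : SpansL1Alm x) {δ : ℕ → ℝ}
    (hlow : ∀ (m m' : ℕ) (α : ℕ → ℝ),
      (1 - δ m) * ∑ n ∈ Icc m m', |α n| ≤ ‖∑ n ∈ Icc m m', α n • x n‖)
    {m : ℕ} (hδ : δ m ≤ 1) {r : ℝ} (hr : ∀ j, r < tailMassSup x j) {ε : ℝ} (hε : 0 < ε) :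
    (1 - δ m) * (3 * r - tailMassSup x m) ≤ 2 + ε := by
  obtain ⟨c, d, K, hc, hd, hcK, hmK, hcr, hdr, hhead⟩ := hx.exists_close_heads hr m hε
  have hδ' : 0 ≤ 1 - δ m := sub_nonneg.2 hδ
  calc (1 - δ m) * (3 * r - tailMassSup x m)
      ≤ (1 - δ m) * (tailMass c m + 2 * tailMass d K - tailMass d m) := by
        refine mul_le_mul_of_nonneg_left ?_ hδ'
        linarith [hx.tailMass_le_tailMassSup hd m]
    _ ≤ (1 - δ m) * tailMass (c - d) m := by
        gcongr
        exact tailMass_add_two_mul_sub_le_tailMass_sub hcK hmK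
    _ ≤ ‖Finsupp.linearCombination ℝ x (c - d)‖ + ∑ n ∈ range m, |(c - d) n| :=
        mul_tailMass_le hx.norm_le_one hlow _ _
    _ ≤ 2 + ε := by
        rw [map_sub]
        simp only [Finsupp.coe_sub, Pi.sub_apply]
        linarith [norm_sub_le (Finsupp.linearCombination ℝ x c)
          (Finsupp.linearCombination ℝ x d)]

theorem SpansL1Alm.tendsto_tailMassSup (hx : SpansL1Alm x) :
    Tendsto (tailMassSup x) atTop (𝓝 1) := by
  obtain ⟨δ, hδ, hδ0, hδb⟩ := id hx
  have hbdd : BddBelow (Set.range (tailMassSup x)) :=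
    ⟨1, by rintro _ ⟨m, rfl⟩; exact hx.one_le_tailMassSup m⟩
  set Γ := ⨅ m, tailMassSup x m
  have hlim : Tendsto (tailMassSup x) atTop (𝓝 Γ) :=
    tendsto_atTop_ciInf hx.antitone_tailMassSup hbdd
  have hkey : ∀ m, (1 - δ m) * (3 * Γ - tailMassSup x m) ≤ 2 := fun m =>
    le_of_forall_pos_le_add fun ε hε => by
      have h := hx.mul_three_mul_sub_tailMassSup_le (fun m m' α => (hδb m m' α).1) (hδ m).2.le
        (r := Γ - ε / 4) (fun j => by linarith [ciInf_le hbdd j]) (ε := ε / 4) (by positivity)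
      nlinarith [mul_nonneg (hδ m).1 hε.le]
  have h2Γ : (1 - 0) * (3 * Γ - Γ) ≤ 2 :=
    le_of_tendsto' ((tendsto_const_nhds.sub hδ0).mul (tendsto_const_nhds.sub hlim)) hkey
  have hΓ : Γ = 1 := le_antisymm (by linarith) (le_ciInf hx.one_le_tailMassSup)
  rwa [hΓ] at hlim

variable {x' : ℕ → StrongDual ℝ X}

lemma apply_linearCombination_of_biorthogonal
    (hbi : ∀ n k, x' n (x k) = if n = k then 1 else 0) (c : ℕ →₀ ℝ) (n : ℕ) :
    x' n (Finsupp.linearCombination ℝ x c) = c n := by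
  simp [Finsupp.linearCombination_apply, map_finsuppSum, hbi, eq_comm]

lemma abs_le_norm_sum_smul_of_biorthogonal (hx1 : ∀ n, ‖x n‖ ≤ 1)
    (hbi : ∀ n k, x' n (x k) = if n = k then 1 else 0) {s : Finset ℕ} {k : ℕ} (hk : k ∈ s)
    (α : ℕ → ℝ) : |α k| ≤ ‖∑ n ∈ s, α n • x' n‖ := by
  have h := (∑ n ∈ s, α n • x' n).le_opNorm (x k)
  simp [hbi, hk] at h
  exact h.trans (mul_le_of_le_one_right (norm_nonneg _) (hx1 k))

lemma SpansL1Alm.norm_sum_smul_le (hx : SpansL1Alm x)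
    (hdense : (Submodule.span ℝ (Set.range x)).topologicalClosure = ⊤)
    (hbi : ∀ n k, x' n (x k) = if n = k then 1 else 0) {m m' : ℕ} {α : ℕ → ℝ} {A : ℝ}
    (hA0 : 0 ≤ A) (hA : ∀ n ∈ Icc m m', |α n| ≤ A) :
    ‖∑ n ∈ Icc m m', α n • x' n‖ ≤ tailMassSup x m * A := by
  have hρ : 0 ≤ tailMassSup x m := zero_le_one.trans (hx.one_le_tailMassSup m)
  refine ContinuousLinearMap.opNorm_le_of_dense _
    (Submodule.dense_iff_topologicalClosure_eq_top.2 hdense) (mul_nonneg hρ hA0) fun y hy => ?_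
  obtain ⟨c, rfl⟩ := Finsupp.mem_span_range_iff_exists_finsupp.1 hy
  rw [← Finsupp.linearCombination_apply]
  simp only [_root_.sum_apply, _root_.smul_apply, apply_linearCombination_of_biorthogonal hbi,
    smul_eq_mul, Real.norm_eq_abs]
  calc |∑ n ∈ Icc m m', α n * c n| ≤ ∑ n ∈ Icc m m', |α n| * |c n| := by
        simpa only [abs_mul] using abs_sum_le_sum_abs (fun n => α n * c n) (Icc m m')
    _ ≤ ∑ n ∈ Icc m m', A * |c n| := by gcongr with n hn; exact hA n hn
    _ = A * ∑ n ∈ Icc m m', |c n| := (mul_sum _ _ _).symm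
    _ ≤ A * tailMass c m := by gcongr; exact sum_Icc_abs_le_tailMass c m m'
    _ ≤ A * (tailMassSup x m * ‖Finsupp.linearCombination ℝ x c‖) := by
        gcongr; exact hx.tailMass_le_tailMassSup_mul c m
    _ = tailMassSup x m * A * ‖Finsupp.linearCombination ℝ x c‖ := by ring

end

theorem biorthogonal_spans_c0_alm_general {X : Type*} [NormedAddCommGroup X] [NormedSpace ℝ X]
    (x : ℕ → X) (hx : SpansL1Alm x)
    (hdense : (Submodule.span ℝ (Set.range x)).topologicalClosure = ⊤)
    (x' : ℕ → StrongDual ℝ X)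
    (hbi : ∀ n k, x' n (x k) = if n = k then 1 else 0) :
    ∃ δ : ℕ → ℝ, (∀ n, δ n ∈ Set.Ico (0 : ℝ) 1) ∧ Tendsto δ atTop (𝓝 0) ∧
      ∀ (m m' : ℕ) (h : m ≤ m') (α : ℕ → ℝ),
        (1 - δ m) * (Finset.Icc m m').sup' (Finset.nonempty_Icc.mpr h) (fun n => |α n|)
            ≤ ‖∑ n ∈ Finset.Icc m m', α n • x' n‖ ∧
        ‖∑ n ∈ Finset.Icc m m', α n • x' n‖ ≤
          (1 - δ m)⁻¹ * (Finset.Icc m m').sup' (Finset.nonempty_Icc.mpr h) (fun n => |α n|) := by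
  have hρ := hx.one_le_tailMassSup
  refine ⟨fun m => 1 - (tailMassSup x m)⁻¹, fun m => ⟨?_, ?_⟩, ?_, fun m m' h α => ?_⟩
  · exact sub_nonneg.2 (inv_le_one_of_one_le₀ (hρ m))
  · exact sub_lt_self _ (inv_pos.2 (zero_lt_one.trans_le (hρ m)))
  · simpa using (tendsto_const_nhds (x := (1 : ℝ))).sub (hx.tendsto_tailMassSup.inv₀ one_ne_zero)
  obtain ⟨k, hk, hA⟩ := exists_mem_eq_sup' (nonempty_Icc.mpr h) fun n => |α n|
  simp only [sub_sub_cancel, inv_inv, hA]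
  constructor
  · calc (tailMassSup x m)⁻¹ * |α k|
        ≤ |α k| := mul_le_of_le_one_left (abs_nonneg _) (inv_le_one_of_one_le₀ (hρ m))
      _ ≤ _ := abs_le_norm_sum_smul_of_biorthogonal hx.norm_le_one hbi hk α
  · exact hx.norm_sum_smul_le hdense hbi (abs_nonneg _) fun n hn => hA ▸ le_sup' (fun n => |α n|) hn

/-- The biorthogonal functionals of a normalized almost isometric ℓ¹-basis
span c₀ almost isometrically. -/
theorem biorthogonal_spans_c0_alm {X : Type*} [NormedAddCommGroup X] [NormedSpace ℝ X]
    [CompleteSpace X] (x : ℕ → X) (hnorm : ∀ n, ‖x n‖ = 1) (hx : SpansL1Alm x)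
    (hdense : (Submodule.span ℝ (Set.range x)).topologicalClosure = ⊤)
    (x' : ℕ → StrongDual ℝ X)
    (hbi : ∀ n k, x' n (x k) = if n = k then 1 else 0) :
    ∃ δ : ℕ → ℝ, (∀ n, δ n ∈ Set.Ico (0 : ℝ) 1) ∧ Tendsto δ atTop (𝓝 0) ∧
      ∀ (m m' : ℕ) (h : m ≤ m') (α : ℕ → ℝ),
        (1 - δ m) * (Finset.Icc m m').sup' (Finset.nonempty_Icc.mpr h) (fun n => |α n|)
            ≤ ‖∑ n ∈ Finset.Icc m m', α n • x' n‖ ∧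
        ‖∑ n ∈ Finset.Icc m m', α n • x' n‖ ≤
          (1 - δ m)⁻¹ * (Finset.Icc m m').sup' (Finset.nonempty_Icc.mpr h) (fun n => |α n|) :=
  biorthogonal_spans_c0_alm_general x hx hdense x' hbi
end
end

section
/- Let X be a Banach space complemented in its bidual via an L-projection P : X'' → X (i.e., X'' = X ⊕₁ X_s with X_s = ker P). If (x_n) is a bounded sequence in X spanning l^1 asymptotically isometrically with inf ‖x_n‖ > 0, then every weak* accumulation point of {x_n} in X'' lies in X_s. -/
/-!
Normalize `y n = ‖x n‖⁻¹ • x n` and pass to an ultrafilter along which `‖x n‖ → r > 0`; there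
`y n` tends weak* to `w = r⁻¹ • z`, so `‖w‖ ≤ 1`. Write `P w = v ∈ X`. Since `w` is a weak*
limit of every tail of `(y n)`, no functional separates the ball of radius `‖w - v‖ + ε`
around `v` from the convex hull of a tail (Hahn–Banach): every tail has convex combinations
within `‖w - v‖ + ε` of `v`. Two such combinations taken on disjoint blocks of indices are at
distance almost `2` by the asymptotically isometric `ℓ¹` estimate, hence `1 ≤ ‖w - v‖`. As `P`
is an L-projection, `‖v‖ + ‖w - v‖ = ‖w‖ ≤ 1`, so `v = 0`, that is `P z = r • P w = 0`.
-/

open Filter Topology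
noncomputable section
/-- A sequence `x` of nonzero elements spans `ℓ¹` asymptotically isometrically. -/
def SpansL1Asy {X : Type*} [NormedAddCommGroup X] [NormedSpace ℝ X] (x : ℕ → X) : Prop :=
  ∃ δ : ℕ → ℝ, (∀ n, δ n ∈ Set.Ico (0 : ℝ) 1) ∧ Tendsto δ atTop (𝓝 0) ∧
    ∀ (m : ℕ) (α : ℕ → ℝ),
      (∑ n ∈ Finset.range m, (1 - δ n) * |α n|) ≤
          ‖∑ n ∈ Finset.range m, α n • (‖x n‖⁻¹ • x n)‖ ∧
        ‖∑ n ∈ Finset.range m, α n • (‖x n‖⁻¹ • x n)‖ ≤ ∑ n ∈ Finset.range m, |α n|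

open Finset Metric NormedSpace

def tailSimplex (N : ℕ) : Set (ℕ →₀ ℝ) :=
  {μ | (∀ n, 0 ≤ μ n) ∧ (∀ n < N, μ n = 0) ∧ μ.sum (fun _ a => a) = 1}

theorem convex_tailSimplex (N : ℕ) : Convex ℝ (tailSimplex N) := by
  rintro μ ⟨hμ0, hμN, hμ1⟩ ν ⟨hν0, hνN, hν1⟩ a b ha hb hab
  refine ⟨fun n => ?_, fun n hn => ?_, ?_⟩
  · simp only [Finsupp.coe_add, Finsupp.coe_smul, Pi.add_apply, Pi.smul_apply, smul_eq_mul]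
    have := hμ0 n
    have := hν0 n
    positivity
  · simp [hμN n hn, hνN n hn]
  · rw [Finsupp.sum_add_index' (fun _ => rfl) (fun _ _ _ => rfl),
      Finsupp.sum_smul_index' (fun _ => rfl), Finsupp.sum_smul_index' (fun _ => rfl),
      ← Finsupp.smul_sum, ← Finsupp.smul_sum, hμ1, hν1, smul_eq_mul, smul_eq_mul, mul_one,
      mul_one, hab]

theorem single_mem_tailSimplex {N n : ℕ} (hn : N ≤ n) : Finsupp.single n 1 ∈ tailSimplex N := by
  refine ⟨fun k => ?_, fun k hk => ?_, by simp [Finsupp.sum_single_index]⟩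
  · rw [Finsupp.single_apply]
    split_ifs <;> norm_num
  · rw [Finsupp.single_apply, if_neg (by omega)]

theorem Finsupp.sum_eq_sum_range_of_support_subset {μ : ℕ →₀ ℝ} {K : ℕ}
    (hK : μ.support ⊆ range K) : μ.sum (fun _ a => a) = ∑ n ∈ range K, μ n :=
  Finsupp.sum_of_support_subset μ hK _ fun _ _ => rfl

section

variable {X : Type*} [NormedAddCommGroup X] [NormedSpace ℝ X]

theorem Finsupp.linearCombination_eq_sum_range_of_support_subset (y : ℕ → X) {μ : ℕ →₀ ℝ}
    {K : ℕ} (hK : μ.support ⊆ range K) :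
    Finsupp.linearCombination ℝ y μ = ∑ n ∈ range K, μ n • y n := by
  rw [Finsupp.linearCombination_apply]
  exact Finsupp.sum_of_support_subset μ hK _ fun _ _ => zero_smul ℝ _

theorem mul_norm_le_of_forall_mem_ball_apply_lt (f : StrongDual ℝ X) {v : X} {R u : ℝ}
    (hR : 0 < R) (hf : ∀ a ∈ ball v R, f a < u) : R * ‖f‖ ≤ u - f v := by
  rw [← le_div_iff₀' hR]
  refine le_of_forall_lt fun r hr => ?_
  obtain ⟨x, hx, hrx⟩ := f.exists_lt_apply_of_lt_opNorm hr
  have hRx : ‖R • x‖ < R := by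
    rw [norm_smul, Real.norm_of_nonneg hR.le]
    nlinarith [norm_nonneg x]
  rw [lt_div_iff₀' hR]
  rcases lt_abs.1 hrx with hpos | hneg
  · have := hf (v + R • x) (by simpa [mem_ball_iff_norm] using hRx)
    rw [map_add, map_smul, smul_eq_mul] at this
    nlinarith
  · have := hf (v - R • x) (by simpa [mem_ball_iff_norm] using hRx)
    rw [map_sub, map_smul, smul_eq_mul] at this
    nlinarith

theorem exists_norm_sub_lt_of_mem_weakStar_closure {C : Set X} (hC : Convex ℝ C)
    {w : StrongDual ℝ (StrongDual ℝ X)}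
    (hw : StrongDual.toWeakDual w ∈
      closure ((fun c => StrongDual.toWeakDual (inclusionInDoubleDual ℝ X c)) '' C))
    (v : X) {R : ℝ} (hR : ‖w - inclusionInDoubleDual ℝ X v‖ < R) :
    ∃ c ∈ C, ‖c - v‖ < R := by
  by_contra! hfar
  have hdisj : Disjoint (ball v R) C := Set.disjoint_left.2 fun a ha hc =>
    (hfar a hc).not_gt (mem_ball_iff_norm.1 ha)
  obtain ⟨f, u, hball, hCf⟩ := geometric_hahn_banach_open (convex_ball v R) isOpen_ball hC hdisj
  have hR0 : 0 < R := (norm_nonneg (w - inclusionInDoubleDual ℝ X v)).trans_lt hR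
  have hfv : f v < u := hball v (mem_ball_self hR0)
  have hwf : u ≤ w f := by
    refine closure_minimal ?_ (isClosed_le continuous_const (WeakDual.eval_continuous f)) hw
    rintro _ ⟨c, hc, rfl⟩
    exact hCf c hc
  have hsing : w f - f v ≤ ‖w - inclusionInDoubleDual ℝ X v‖ * ‖f‖ :=
    (le_abs_self _).trans ((w - inclusionInDoubleDual ℝ X v).le_opNorm f)
  have hball_norm := mul_norm_le_of_forall_mem_ball_apply_lt f hR0 hball
  rcases (norm_nonneg f).eq_or_lt with hf0 | hfpos
  · rw [← hf0, mul_zero] at hsing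
    linarith
  · nlinarith [mul_lt_mul_of_pos_right hR hfpos]

section LowerEstimate

variable {y : ℕ → X} {δ : ℕ → ℝ}
  (hlow : ∀ (m : ℕ) (α : ℕ → ℝ),
    ∑ n ∈ range m, (1 - δ n) * |α n| ≤ ‖∑ n ∈ range m, α n • y n‖)
include hlow

theorem two_mul_le_norm_sub_of_mem_tailSimplex {N m : ℕ} {R : ℝ} (hNm : N ≤ m)
    (hδ : ∀ n ≥ N, R ≤ 1 - δ n) {μ ν : ℕ →₀ ℝ} (hμ : μ ∈ tailSimplex N)
    (hμm : ∀ n ≥ m, μ n = 0) (hν : ν ∈ tailSimplex m) :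
    2 * R ≤ ‖Finsupp.linearCombination ℝ y μ - Finsupp.linearCombination ℝ y ν‖ := by
  obtain ⟨hμ0, hμN, hμ1⟩ := hμ
  obtain ⟨hν0, hνm, hν1⟩ := hν
  set K := ((μ.support ∪ ν.support).sup id).succ
  have hsupp := (μ.support ∪ ν.support).subset_range_sup_succ
  have hμK : μ.support ⊆ range K := subset_union_left.trans hsupp
  have hνK : ν.support ⊆ range K := subset_union_right.trans hsupp
  -- `μ` lives on `[N, m)` and `ν` on `[m, ∞)`, so `|μ n - ν n| = μ n + ν n`
  have hterm : ∀ n, R * (μ n + ν n) ≤ (1 - δ n) * |μ n - ν n| := by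
    intro n
    rcases lt_or_ge n N with hn | hn
    · simp [hμN n hn, hνm n (hn.trans_le hNm)]
    rcases lt_or_ge n m with hnm | hnm
    · rw [hνm n hnm, add_zero, sub_zero, abs_of_nonneg (hμ0 n)]
      exact mul_le_mul_of_nonneg_right (hδ n hn) (hμ0 n)
    · rw [hμm n hnm, zero_add, zero_sub, abs_neg, abs_of_nonneg (hν0 n)]
      exact mul_le_mul_of_nonneg_right (hδ n hn) (hν0 n)
  calc 2 * R = ∑ n ∈ range K, R * (μ n + ν n) := by
        rw [← mul_sum, sum_add_distrib, ← Finsupp.sum_eq_sum_range_of_support_subset hμK,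
          ← Finsupp.sum_eq_sum_range_of_support_subset hνK, hμ1, hν1]
        ring
    _ ≤ ∑ n ∈ range K, (1 - δ n) * |μ n - ν n| := sum_le_sum fun n _ => hterm n
    _ ≤ ‖∑ n ∈ range K, (μ n - ν n) • y n‖ := hlow K fun n => μ n - ν n
    _ = _ := by
      simp only [sub_smul, sum_sub_distrib,
        Finsupp.linearCombination_eq_sum_range_of_support_subset y hμK,
        Finsupp.linearCombination_eq_sum_range_of_support_subset y hνK]

theorem one_le_of_forall_exists_norm_linearCombination_sub_lt (hδ : Tendsto δ atTop (𝓝 0))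
    {v : X} {ρ : ℝ}
    (h : ∀ N, ∀ R > ρ, ∃ μ ∈ tailSimplex N, ‖Finsupp.linearCombination ℝ y μ - v‖ < R) :
    1 ≤ ρ := by
  by_contra! hρ
  obtain ⟨R, hρR, hR1⟩ := exists_between hρ
  obtain ⟨N, hN⟩ := eventually_atTop.1 (hδ.eventually (ge_mem_nhds (sub_pos.2 hR1)))
  obtain ⟨μ, hμ, hμv⟩ := h N R hρR
  set m := max N (μ.support.sup id).succ
  have hμm : ∀ n ≥ m, μ n = 0 := fun n hn => Finsupp.notMem_support_iff.1 fun hmem => by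
    have := mem_range.1 (μ.support.subset_range_sup_succ hmem)
    omega
  obtain ⟨ν, hν, hνv⟩ := h m R hρR
  have hfar := two_mul_le_norm_sub_of_mem_tailSimplex (R := R) hlow (le_max_left _ _)
    (fun n hn => by linarith [hN n hn]) hμ hμm hν
  have htri := norm_sub_le_norm_sub_add_norm_sub (Finsupp.linearCombination ℝ y μ) v
    (Finsupp.linearCombination ℝ y ν)
  rw [norm_sub_rev v] at htri
  linarith

theorem one_le_norm_sub_of_tendsto_weakStar (hδ : Tendsto δ atTop (𝓝 0))
    {U : Filter ℕ} [U.NeBot] (hU : U ≤ atTop) {w : StrongDual ℝ (StrongDual ℝ X)}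
    (hw : Tendsto (fun n => StrongDual.toWeakDual (inclusionInDoubleDual ℝ X (y n))) U
      (𝓝 (StrongDual.toWeakDual w)))
    (v : X) : 1 ≤ ‖w - inclusionInDoubleDual ℝ X v‖ := by
  refine one_le_of_forall_exists_norm_linearCombination_sub_lt (v := v) hlow hδ fun N R hR => ?_
  have hwN : StrongDual.toWeakDual w ∈
      closure ((fun c => StrongDual.toWeakDual (inclusionInDoubleDual ℝ X c)) ''
        (Finsupp.linearCombination ℝ y '' tailSimplex N)) :=
    mem_closure_of_tendsto hw (mem_of_superset (hU (Ici_mem_atTop N)) fun n hn =>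
      ⟨y n, ⟨Finsupp.single n 1, single_mem_tailSimplex hn, by simp⟩, rfl⟩)
  obtain ⟨_, ⟨μ, hμ, rfl⟩, hμv⟩ :=
    exists_norm_sub_lt_of_mem_weakStar_closure ((convex_tailSimplex N).linear_image _) hwN v hR
  exact ⟨μ, hμ, hμv⟩

end LowerEstimate

end

theorem WeakDual.norm_le_of_tendsto {X ι : Type*} [NormedAddCommGroup X] [NormedSpace ℝ X]
    {l : Filter ι} [l.NeBot] {φ : ι → StrongDual ℝ X} {ψ : StrongDual ℝ X} {C : ℝ}
    (h : Tendsto (fun i => StrongDual.toWeakDual (φ i)) l (𝓝 (StrongDual.toWeakDual ψ)))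
    (hφ : ∀ i, ‖φ i‖ ≤ C) : ‖ψ‖ ≤ C :=
  mem_closedBall_zero_iff.1 ((WeakDual.isClosed_closedBall 0 C).mem_of_tendsto h
    (.of_forall fun i => mem_closedBall_zero_iff.2 (hφ i)))

theorem MapClusterPt.exists_ultrafilter_tendsto_inv_smul {E : Type*} [TopologicalSpace E]
    [AddCommGroup E] [Module ℝ E] [ContinuousSMul ℝ E] {u : ℕ → E} {a : E}
    (ha : MapClusterPt a atTop u) {s : ℕ → ℝ} {c M : ℝ} (hc : 0 < c)
    (hs : ∀ n, s n ∈ Set.Icc c M) :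
    ∃ r ∈ Set.Icc c M, ∃ U : Ultrafilter ℕ, (U : Filter ℕ) ≤ atTop ∧
      Tendsto (fun n => (s n)⁻¹ • u n) (U : Filter ℕ) (𝓝 (r⁻¹ • a)) := by
  obtain ⟨U, hUtop, hUa⟩ := mapClusterPt_iff_ultrafilter.1 ha
  obtain ⟨r, hr, hUr⟩ := isCompact_Icc.ultrafilter_le_nhds (U.map s)
    (tendsto_principal.2 (.of_forall hs))
  exact ⟨r, hr, U, hUtop, ((tendsto_map'_iff.1 hUr).inv₀ (hc.trans_le hr.1).ne').smul hUa⟩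

theorem asyL1_weakStar_accumulation_in_singular_general {X : Type*} [NormedAddCommGroup X]
    [NormedSpace ℝ X]
    (P : StrongDual ℝ (StrongDual ℝ X) →L[ℝ]
        StrongDual ℝ (StrongDual ℝ X))
    (hL : ∀ z, ‖z‖ = ‖P z‖ + ‖z - P z‖)
    (hrange : Set.range ⇑P = Set.range ⇑(NormedSpace.inclusionInDoubleDual ℝ X))
    (x : ℕ → X) (hbdd : ∃ M, ∀ n, ‖x n‖ ≤ M)
    (hx : SpansL1Asy x) (hinf : ∃ c > 0, ∀ n, c ≤ ‖x n‖)
    (z : StrongDual ℝ (StrongDual ℝ X))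
    (hz : MapClusterPt (StrongDual.toWeakDual z) atTop
      (fun n => StrongDual.toWeakDual (NormedSpace.inclusionInDoubleDual ℝ X (x n)))) :
    P z = 0 := by
  obtain ⟨δ, -, hδ, hlow⟩ := hx
  obtain ⟨M, hM⟩ := hbdd
  obtain ⟨c, hc, hcx⟩ := hinf
  set ι := inclusionInDoubleDual ℝ X
  obtain ⟨r, hr, U, hU, hUw⟩ :=
    MapClusterPt.exists_ultrafilter_tendsto_inv_smul hz hc fun n => ⟨hcx n, hM n⟩
  simp only [← map_smul] at hUw
  have hw1 : ‖r⁻¹ • z‖ ≤ 1 := WeakDual.norm_le_of_tendsto hUw fun n =>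
    (double_dual_bound ℝ X _).trans (by
      rw [norm_smul, norm_inv, norm_norm, inv_mul_cancel₀ (hc.trans_le (hcx n)).ne'])
  obtain ⟨v, hv⟩ : P (r⁻¹ • z) ∈ Set.range ι := hrange ▸ Set.mem_range_self _
  have hιv : ‖ι v‖ = ‖v‖ := (inclusionInDoubleDualLi ℝ).norm_map v
  have hsplit := hL (r⁻¹ • z)
  rw [← hv, hιv] at hsplit
  have hfar := one_le_norm_sub_of_tendsto_weakStar (fun m α => (hlow m α).1) hδ hU hUw v
  have hv0 : v = 0 := norm_le_zero_iff.1 (by linarith)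
  rw [← smul_inv_smul₀ (hc.trans_le hr.1).ne' z, map_smul, ← hv, hv0, map_zero, smul_zero]

/-- In an L-embedded space, every weak* accumulation point of a bounded sequence
spanning ℓ¹ asymptotically isometrically (bounded away from 0) lies in the
singular part Xₛ = ker P. -/
theorem asyL1_weakStar_accumulation_in_singular {X : Type*} [NormedAddCommGroup X]
    [NormedSpace ℝ X] [CompleteSpace X]
    (P : StrongDual ℝ (StrongDual ℝ X) →L[ℝ]
        StrongDual ℝ (StrongDual ℝ X))
    (hidem : ∀ z, P (P z) = P z)
    (hL : ∀ z, ‖z‖ = ‖P z‖ + ‖z - P z‖)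
    (hrange : Set.range ⇑P = Set.range ⇑(NormedSpace.inclusionInDoubleDual ℝ X))
    (x : ℕ → X) (hbdd : ∃ M, ∀ n, ‖x n‖ ≤ M)
    (hx : SpansL1Asy x) (hinf : ∃ c > 0, ∀ n, c ≤ ‖x n‖)
    (z : StrongDual ℝ (StrongDual ℝ X))
    (hz : MapClusterPt (StrongDual.toWeakDual z) atTop
      (fun n => StrongDual.toWeakDual (NormedSpace.inclusionInDoubleDual ℝ X (x n)))) :
    P z = 0 :=
  asyL1_weakStar_accumulation_in_singular_general P hL hrange x hbdd hx hinf z hz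
end
end

section
/- Let X be an L-embedded Banach space with X'' = X ⊕₁ X_s. Define C₀ as the class of bounded sequences (x_n) in X each of whose subsequences admits a further subsequence that spans l^1 asymptotically isometrically or converges to 0 in norm, and C = {(x_n) : ∃ x ∈ X with (x_n − x) ∈ C₀}. Then the limit x in the definition of C is unique; i.e., if (x_n − x) ∈ C₀ and (x_n − y) ∈ C₀ then x = y. -/
open Filter Topology
noncomputable section
/-- Membership in the class C₀ of the construction of the abstract measure topology:
bounded, and every subsequence has a further subsequence spanning ℓ¹ asymptotically
isometrically or converging to 0 in norm. -/
def InC0 {X : Type*} [NormedAddCommGroup X] [NormedSpace ℝ X] (s : ℕ → X) : Prop :=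
  (∃ M, ∀ n, ‖s n‖ ≤ M) ∧
    ∀ φ : ℕ → ℕ, StrictMono φ → ∃ ψ : ℕ → ℕ, StrictMono ψ ∧
      (SpansL1Asy (s ∘ φ ∘ ψ) ∨ Tendsto (fun n => ‖s (φ (ψ n))‖) atTop (𝓝 0))

/-!
Along a common subsequence both `xₙ - a` and `xₙ - b` are good, and if `η` is the weak* limit of
`xₙ - a` along a free ultrafilter, then `xₙ - b` tends weak* to `η + (a - b)`. So it suffices
that the weak* limit of a good bounded sequence is killed by `P`, i.e. lies in `X_s`. For a null
sequence the limit is `0`. For an asymptotically isometric `ℓ¹` sequence it is a multiple of the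
limit `ζ` of the normalised vectors `wₙ`. If `Pζ = x`, the `ℓ¹` estimates give
`|Σ aₙ (1 - δₙ)| ≤ ‖x + Σ aₙ wₙ‖` for combinations supported on some tail, so Hahn–Banach yields
`f` of norm `≤ 1` with `f x = 0` and `f wₙ = 1 - δₙ` on that tail. Then
`1 = (ζ - x) f ≤ ‖ζ - x‖ = ‖ζ‖ - ‖x‖ ≤ 1 - ‖x‖`, so `x = 0`.
-/

open NormedSpace

section

variable {X : Type*} [NormedAddCommGroup X] [NormedSpace ℝ X]

def WeakStarTendsto {α : Type*} (c : α → X) (F : Filter α)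
    (z : StrongDual ℝ (StrongDual ℝ X)) : Prop :=
  ∀ f : StrongDual ℝ X, Tendsto (fun n => f (c n)) F (𝓝 (z f))

theorem Ultrafilter.exists_tendsto_of_norm_le {α E : Type*} [NormedAddCommGroup E]
    [ProperSpace E] (U : Ultrafilter α) {g : α → E} {M : ℝ} (hg : ∀ n, ‖g n‖ ≤ M) :
    ∃ y, Tendsto g U (𝓝 y) := by
  obtain ⟨y, -, hy⟩ := (isCompact_closedBall (0 : E) M).ultrafilter_le_nhds' (U.map g)
    (Ultrafilter.mem_map.mpr (univ_mem' fun n => mem_closedBall_zero_iff.mpr (hg n)))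
  exact ⟨y, hy⟩

theorem exists_weakStarTendsto_of_norm_le {α : Type*} (U : Ultrafilter α) {c : α → X} {M : ℝ}
    (hc : ∀ n, ‖c n‖ ≤ M) : ∃ z, ‖z‖ ≤ M ∧ WeakStarTendsto c U z := by
  let g : α → WeakDual ℝ (StrongDual ℝ X) := fun n => inclusionInDoubleDual ℝ X (c n)
  obtain ⟨z, hz, hgz⟩ := (WeakDual.isCompact_closedBall (0 : StrongDual ℝ (StrongDual ℝ X)) M
    ).ultrafilter_le_nhds' (U.map g) (Ultrafilter.mem_map.mpr (univ_mem' fun n =>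
      mem_closedBall_zero_iff.mpr ((double_dual_bound ℝ X (c n)).trans (hc n))))
  exact ⟨z, mem_closedBall_zero_iff.mp hz, fun f =>
    ((WeakDual.eval_continuous f).tendsto z).comp hgz⟩

/-- `Σ aᵢ vᵢ ↦ Σ aᵢ cᵢ` is well defined on the span of `v`, of norm at most one; extend it by
Hahn–Banach. -/
theorem exists_dual_apply_eq_of_linearCombination_le {ι : Type*} (v : ι → X) (c : ι → ℝ)
    (h : ∀ a : ι →₀ ℝ, Finsupp.linearCombination ℝ c a ≤ ‖Finsupp.linearCombination ℝ v a‖) :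
    ∃ f : StrongDual ℝ X, ‖f‖ ≤ 1 ∧ ∀ i, f (v i) = c i := by
  set L := Finsupp.linearCombination ℝ v
  set C := Finsupp.linearCombination ℝ c
  have habs : ∀ a, |C a| ≤ ‖L a‖ := fun a => by
    have hneg := h (-a)
    rw [map_neg, map_neg, norm_neg] at hneg
    exact abs_le.mpr ⟨by linarith, h a⟩
  have hker : LinearMap.ker L ≤ LinearMap.ker C := fun a ha =>
    abs_nonpos_iff.mp ((habs a).trans_eq (by simpa using ha))
  let g : LinearMap.range L →ₗ[ℝ] ℝ :=
    (LinearMap.ker L).liftQ C hker ∘ₗ L.quotKerEquivRange.symm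
  have hg : ∀ a, g ⟨L a, LinearMap.mem_range_self L a⟩ = C a := fun a => by
    rw [LinearMap.comp_apply, LinearEquiv.coe_coe, LinearMap.quotKerEquivRange_symm_apply_image]
    rfl
  obtain ⟨f, hf, hfn⟩ := exists_extension_norm_eq (LinearMap.range L)
    (g.mkContinuous 1 fun ⟨_, a, rfl⟩ => by
      rw [one_mul, Real.norm_eq_abs, hg]; exact habs a)
  refine ⟨f, hfn.trans_le (LinearMap.mkContinuous_norm_le _ zero_le_one _), fun i => ?_⟩
  have hfi := hf ⟨L (Finsupp.single i 1), LinearMap.mem_range_self L _⟩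
  rw [LinearMap.mkContinuous_apply, hg] at hfi
  simpa [L, C] using hfi

theorem abs_linearCombination_le_sum {c : ℕ → ℝ} (hc : ∀ n, 0 ≤ c n) (a : ℕ →₀ ℝ) :
    |Finsupp.linearCombination ℝ c a| ≤ a.sum fun n r => c n * |r| := by
  rw [Finsupp.linearCombination_apply]
  refine (Finset.abs_sum_le_sum_abs _ _).trans_eq (Finset.sum_congr rfl fun n _ => ?_)
  simp only [smul_eq_mul, abs_mul, abs_of_nonneg (hc n), mul_comm]

/-- Two violations with disjoint supports would contradict the weighted `ℓ¹` lower bound for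
their difference, by the triangle inequality through `x`. -/
theorem exists_abs_linearCombination_le_norm_add {w : ℕ → X} {c : ℕ → ℝ} (hc : ∀ n, 0 ≤ c n)
    (hlow : ∀ a : ℕ →₀ ℝ, (a.sum fun n r => c n * |r|) ≤ ‖Finsupp.linearCombination ℝ w a‖)
    (x : X) :
    ∃ N, ∀ a : ℕ →₀ ℝ, (∀ n ∈ a.support, N ≤ n) →
      |Finsupp.linearCombination ℝ c a| ≤ ‖x + Finsupp.linearCombination ℝ w a‖ := by
  by_contra! hbad
  obtain ⟨a₁, -, h₁⟩ := hbad 0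
  obtain ⟨M, hM⟩ := a₁.support.exists_nat_subset_range
  obtain ⟨a₂, ha₂, h₂⟩ := hbad M
  have hdisj : Disjoint a₁.support (-a₂).support := by
    rw [Finsupp.support_neg]
    exact Finset.disjoint_left.mpr fun n h₁ h₂ =>
      (Finset.mem_range.mp (hM h₁)).not_ge (ha₂ n h₂)
  have hl1 := hlow (a₁ + -a₂)
  rw [Finsupp.sum_add_index_of_disjoint hdisj, Finsupp.sum_neg_index (by simp)] at hl1
  simp only [abs_neg] at hl1
  have hsplit : Finsupp.linearCombination ℝ w (a₁ + -a₂) =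
      (x + Finsupp.linearCombination ℝ w a₁) - (x + Finsupp.linearCombination ℝ w a₂) := by
    rw [map_add, map_neg]; abel
  rw [hsplit] at hl1
  linarith [norm_sub_le (x + Finsupp.linearCombination ℝ w a₁)
    (x + Finsupp.linearCombination ℝ w a₂), abs_linearCombination_le_sum hc a₁,
    abs_linearCombination_le_sum hc a₂]

theorem linearCombination_le_norm_smul_add {w : ℕ → X} {c : ℕ → ℝ} (hc : ∀ n, 0 ≤ c n)
    (hlow : ∀ a : ℕ →₀ ℝ, (a.sum fun n r => c n * |r|) ≤ ‖Finsupp.linearCombination ℝ w a‖)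
    {x : X} {N : ℕ} (hN : ∀ a : ℕ →₀ ℝ, (∀ n ∈ a.support, N ≤ n) →
      |Finsupp.linearCombination ℝ c a| ≤ ‖x + Finsupp.linearCombination ℝ w a‖)
    (s : ℝ) {b : ℕ →₀ ℝ} (hb : ∀ n ∈ b.support, N ≤ n) :
    Finsupp.linearCombination ℝ c b ≤ ‖s • x + Finsupp.linearCombination ℝ w b‖ := by
  refine (le_abs_self _).trans ?_
  rcases eq_or_ne s 0 with rfl | hs
  · rw [zero_smul, zero_add]
    exact (abs_linearCombination_le_sum hc b).trans (hlow b)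
  have hscale : s • x + Finsupp.linearCombination ℝ w b =
      s • (x + Finsupp.linearCombination ℝ w (s⁻¹ • b)) := by
    rw [map_smul, smul_add, smul_inv_smul₀ hs]
  have hNb := hN (s⁻¹ • b) fun n hn => hb n (Finsupp.support_smul hn)
  rw [map_smul, smul_eq_mul, abs_mul, abs_inv] at hNb
  rw [hscale, norm_smul, Real.norm_eq_abs]
  calc |Finsupp.linearCombination ℝ c b|
      = |s| * (|s|⁻¹ * |Finsupp.linearCombination ℝ c b|) := by field_simp
    _ ≤ _ := by gcongr

theorem exists_dual_apply_eq_zero_of_tail {w : ℕ → X} {c : ℕ → ℝ} (hc : ∀ n, 0 ≤ c n)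
    (hlow : ∀ a : ℕ →₀ ℝ, (a.sum fun n r => c n * |r|) ≤ ‖Finsupp.linearCombination ℝ w a‖)
    (x : X) :
    ∃ N, ∃ f : StrongDual ℝ X, ‖f‖ ≤ 1 ∧ f x = 0 ∧ ∀ n, N ≤ n → f (w n) = c n := by
  obtain ⟨N, hN⟩ := exists_abs_linearCombination_le_norm_add hc hlow x
  set v : Option ℕ → X := fun o => o.elim x fun n => w (n + N)
  set d : Option ℕ → ℝ := fun o => o.elim 0 fun n => c (n + N)
  have hvd : ∀ a : Option ℕ →₀ ℝ,
      Finsupp.linearCombination ℝ d a ≤ ‖Finsupp.linearCombination ℝ v a‖ := by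
    intro a
    rw [Finsupp.linearCombination_option, Finsupp.linearCombination_option]
    change a none • (0 : ℝ) + Finsupp.linearCombination ℝ (c ∘ (· + N)) a.some ≤
      ‖a none • x + Finsupp.linearCombination ℝ (w ∘ (· + N)) a.some‖
    rw [smul_zero, zero_add, ← Finsupp.linearCombination_mapDomain,
      ← Finsupp.linearCombination_mapDomain]
    refine linearCombination_le_norm_smul_add hc hlow hN (a none) fun n hn => ?_
    classical
    obtain ⟨k, -, rfl⟩ := Finset.mem_image.mp (Finsupp.mapDomain_support hn)
    exact Nat.le_add_left N k
  obtain ⟨f, hf1, hf⟩ := exists_dual_apply_eq_of_linearCombination_le v d hvd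
  refine ⟨N, f, hf1, hf none, fun n hn => ?_⟩
  obtain ⟨k, rfl⟩ := Nat.exists_eq_add_of_le' hn
  exact hf (some k)

theorem SpansL1Asy.exists_weighted_lower_bound {u : ℕ → X} (hu : SpansL1Asy u) :
    ∃ c : ℕ → ℝ, (∀ n, 0 ≤ c n) ∧ Tendsto c atTop (𝓝 1) ∧
      ∀ a : ℕ →₀ ℝ, (a.sum fun n r => c n * |r|) ≤
        ‖Finsupp.linearCombination ℝ (fun n => ‖u n‖⁻¹ • u n) a‖ := by
  obtain ⟨δ, hδ, hδ0, hbound⟩ := hu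
  refine ⟨fun n => 1 - δ n, fun n => sub_nonneg.mpr (hδ n).2.le,
    by simpa using tendsto_const_nhds.sub hδ0, fun a => ?_⟩
  obtain ⟨m, hm⟩ := a.support.exists_nat_subset_range
  rw [Finsupp.linearCombination_apply, Finsupp.sum_of_support_subset a hm _ (by simp),
    Finsupp.sum_of_support_subset a hm _ (by simp)]
  exact (hbound m a).1

theorem apply_eq_zero_of_weakStarTendsto_of_weighted_lower_bound
    (P : StrongDual ℝ (StrongDual ℝ X) →L[ℝ] StrongDual ℝ (StrongDual ℝ X))
    (hL : ∀ z, ‖z‖ = ‖P z‖ + ‖z - P z‖)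
    (hrange : Set.range P ⊆ Set.range (inclusionInDoubleDual ℝ X))
    {w : ℕ → X} {c : ℕ → ℝ} (hc : ∀ n, 0 ≤ c n) (hc1 : Tendsto c atTop (𝓝 1))
    (hlow : ∀ a : ℕ →₀ ℝ, (a.sum fun n r => c n * |r|) ≤ ‖Finsupp.linearCombination ℝ w a‖)
    {U : Ultrafilter ℕ} (hU : (U : Filter ℕ) ≤ atTop) {ζ : StrongDual ℝ (StrongDual ℝ X)}
    (hζ1 : ‖ζ‖ ≤ 1) (hζ : WeakStarTendsto w U ζ) :
    P ζ = 0 := by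
  obtain ⟨x, hx⟩ := hrange ⟨ζ, rfl⟩
  obtain ⟨N, f, hf1, hfx, hfw⟩ := exists_dual_apply_eq_zero_of_tail hc hlow x
  have hζf : ζ f = 1 := tendsto_nhds_unique (hζ f) ((hc1.mono_left hU).congr'
    (((eventually_ge_atTop N).filter_mono hU).mono fun n hn => (hfw n hn).symm))
  have hPζf : P ζ f = 0 := by rw [← hx, dual_def, hfx]
  have hsing : 1 ≤ ‖ζ - P ζ‖ :=
    calc (1 : ℝ) = (ζ - P ζ) f := by rw [sub_apply, hζf, hPζf, sub_zero]
      _ ≤ ‖(ζ - P ζ) f‖ := Real.le_norm_self _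
      _ ≤ ‖ζ - P ζ‖ * ‖f‖ := (ζ - P ζ).le_opNorm f
      _ ≤ ‖ζ - P ζ‖ := mul_le_of_le_one_right (norm_nonneg (ζ - P ζ)) hf1
  have hPζ : ‖P ζ‖ ≤ 0 := by linarith [hL ζ]
  exact (P ζ).opNorm_zero_iff.mp (hPζ.antisymm (norm_nonneg (P ζ)))

theorem apply_eq_zero_of_weakStarTendsto
    (P : StrongDual ℝ (StrongDual ℝ X) →L[ℝ] StrongDual ℝ (StrongDual ℝ X))
    (hL : ∀ z, ‖z‖ = ‖P z‖ + ‖z - P z‖)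
    (hrange : Set.range P ⊆ Set.range (inclusionInDoubleDual ℝ X))
    {s : ℕ → X} {M : ℝ} (hs : ∀ n, ‖s n‖ ≤ M)
    (hgood : SpansL1Asy s ∨ Tendsto (fun n => ‖s n‖) atTop (𝓝 0))
    {U : Ultrafilter ℕ} (hU : (U : Filter ℕ) ≤ atTop) {η : StrongDual ℝ (StrongDual ℝ X)}
    (hη : WeakStarTendsto s U η) :
    P η = 0 := by
  rcases hgood with hspan | hnull
  · obtain ⟨c, hc, hc1, hlow⟩ := hspan.exists_weighted_lower_bound
    obtain ⟨ζ, hζ1, hζ⟩ := exists_weakStarTendsto_of_norm_le U (M := 1)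
      (c := fun n => ‖s n‖⁻¹ • s n) fun n => by
        rw [norm_smul, norm_inv, norm_norm]
        exact inv_mul_le_one_of_le₀ le_rfl (norm_nonneg _)
    obtain ⟨r, hr⟩ := U.exists_tendsto_of_norm_le (g := fun n => ‖s n‖) fun n =>
      (norm_norm (s n)).trans_le (hs n)
    have hηζ : η = r • ζ := ContinuousLinearMap.ext fun f =>
      tendsto_nhds_unique (hη f) ((hr.mul (hζ f)).congr fun n => by
        rcases eq_or_ne (s n) 0 with h | h
        · simp [h]
        · rw [map_smul, smul_eq_mul, mul_inv_cancel_left₀ (norm_ne_zero_iff.mpr h)])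
    rw [hηζ, map_smul, apply_eq_zero_of_weakStarTendsto_of_weighted_lower_bound P hL hrange
      hc hc1 hlow hU hζ1 hζ, smul_zero]
  · have hη0 : η = 0 := ContinuousLinearMap.ext fun f =>
      tendsto_nhds_unique (hη f) (by
        refine (squeeze_zero_norm (fun n => f.le_opNorm (s n)) ?_).mono_left hU
        simpa using hnull.const_mul ‖f‖)
    rw [hη0, map_zero]

end

theorem C0_limit_unique_general {X : Type*} [NormedAddCommGroup X] [NormedSpace ℝ X]
    (P : StrongDual ℝ (StrongDual ℝ X) →L[ℝ]
        StrongDual ℝ (StrongDual ℝ X))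
    (hidem : ∀ z, P (P z) = P z)
    (hL : ∀ z, ‖z‖ = ‖P z‖ + ‖z - P z‖)
    (hrange : Set.range ⇑P = Set.range ⇑(NormedSpace.inclusionInDoubleDual ℝ X))
    (x : ℕ → X) (a b : X)
    (ha : InC0 (fun n => x n - a)) (hb : InC0 (fun n => x n - b)) :
    a = b := by
  have hfix : ∀ y, P (inclusionInDoubleDual ℝ X y) = inclusionInDoubleDual ℝ X y := fun y => by
    obtain ⟨z, hz⟩ := hrange.ge ⟨y, rfl⟩
    rw [← hz, hidem]
  obtain ⟨⟨Ma, hMa⟩, ha'⟩ := ha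
  obtain ⟨⟨Mb, hMb⟩, hb'⟩ := hb
  obtain ⟨ψ₁, hψ₁, hga⟩ := ha' id strictMono_id
  obtain ⟨ψ₂, hψ₂, hgb⟩ := hb' ψ₁ hψ₁
  set U := hyperfilter ℕ
  have hU : (U : Filter ℕ) ≤ atTop := Nat.hyperfilter_le_atTop
  have hU₂ : (U.map ψ₂ : Filter ℕ) ≤ atTop := hψ₂.tendsto_atTop.mono_left hU
  obtain ⟨η, -, hη⟩ := exists_weakStarTendsto_of_norm_le (U.map ψ₂)
    (c := fun n => x (ψ₁ n) - a) fun n => hMa (ψ₁ n)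
  have hPη := apply_eq_zero_of_weakStarTendsto P hL hrange.le (fun n => hMa (ψ₁ n)) hga hU₂ hη
  have hη' : WeakStarTendsto (fun n => x (ψ₁ (ψ₂ n)) - b) U
      (η + inclusionInDoubleDual ℝ X (a - b)) := fun f => by
    simpa using (tendsto_map'_iff.mp (hη f)).add_const (f (a - b))
  have hPη' := apply_eq_zero_of_weakStarTendsto P hL hrange.le (fun n => hMb _) hgb hU hη'
  rw [map_add, hPη, zero_add, hfix] at hPη'
  exact sub_eq_zero.mp <| (inclusionInDoubleDualLi ℝ (E := X)).injective <|
    hPη'.trans (map_zero (inclusionInDoubleDual ℝ X)).symm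

/-- In an L-embedded space the limit in the definition of the convergence class C
is unique: if both (xₙ - a) ∈ C₀ and (xₙ - b) ∈ C₀ then a = b. -/
theorem C0_limit_unique {X : Type*} [NormedAddCommGroup X] [NormedSpace ℝ X]
    [CompleteSpace X]
    (P : StrongDual ℝ (StrongDual ℝ X) →L[ℝ]
        StrongDual ℝ (StrongDual ℝ X))
    (hidem : ∀ z, P (P z) = P z)
    (hL : ∀ z, ‖z‖ = ‖P z‖ + ‖z - P z‖)
    (hrange : Set.range ⇑P = Set.range ⇑(NormedSpace.inclusionInDoubleDual ℝ X))
    (x : ℕ → X) (a b : X)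
    (ha : InC0 (fun n => x n - a)) (hb : InC0 (fun n => x n - b)) :
    a = b :=
  C0_limit_unique_general P hidem hL hrange x a b ha hb
end
end

section
/- Let X be a Banach space admitting an abstract measure topology τ_μ. If a sequence (x_n) in X converges to x both weakly and with respect to τ_μ (to possibly different limits), then it converges in norm and all limits coincide. -/
/-! A τ_μ-null sequence has a subsequence that is norm-null or spans `ℓ¹` asymptotically
isometrically. In the second case the lower `ℓ¹` estimate makes `∑ cₙ uₙ ↦ ∑ (-1)ⁿ cₙ` bounded on
the span of the normalized vectors `uₙ`, and its Hahn–Banach extension `f` has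
`f zₙ = (-1)ⁿ ‖zₙ‖`; weak convergence of `zₙ` forces the limit of this alternating sequence to
be `0`, so again `‖zₙ‖ → 0`. Applied to every subsequence of `s - b`, this gives `s → b` in
norm, and then the weak limit `a` must be `b`. -/
open Filter Topology
noncomputable section
/-- An abstract measure topology on a Banach space. -/
structure AbstractMeasureTopology (X : Type*) [NormedAddCommGroup X] [NormedSpace ℝ X] where
  τ : TopologicalSpace X
  sequential : @SequentialSpace X τ
  unique_limits : ∀ (s : ℕ → X) (a b : X),
    Tendsto s atTop (@nhds X τ a) → Tendsto s atTop (@nhds X τ b) → a = b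
  weaker : ∀ U : Set X, IsOpen[τ] U → IsOpen U
  translation : ∀ (s : ℕ → X) (x : X),
    Tendsto s atTop (@nhds X τ x) ↔ Tendsto (fun n => s n - x) atTop (@nhds X τ 0)
  asy_to_zero : ∀ s : ℕ → X, (∃ M, ∀ n, ‖s n‖ ≤ M) → SpansL1Asy s →
    Tendsto s atTop (@nhds X τ 0)
  null_structure : ∀ s : ℕ → X, Tendsto s atTop (@nhds X τ 0) →
    (∃ M, ∀ n, ‖s n‖ ≤ M) ∧
      ∃ φ : ℕ → ℕ, StrictMono φ ∧
        (SpansL1Asy (s ∘ φ) ∨ Tendsto (fun n => ‖s (φ n)‖) atTop (𝓝 0))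

/-- A Banach space is L-embedded if its canonical image in the bidual is the range
of an L-projection. -/
def IsLEmbedded (Y : Type*) [NormedAddCommGroup Y] [NormedSpace ℝ Y] : Prop :=
  ∃ P : StrongDual ℝ (StrongDual ℝ Y) →L[ℝ]
      StrongDual ℝ (StrongDual ℝ Y),
    (∀ z, P (P z) = P z) ∧ (∀ z, ‖z‖ = ‖P z‖ + ‖z - P z‖) ∧
    Set.range ⇑P = Set.range ⇑(NormedSpace.inclusionInDoubleDual ℝ Y)

open NormedSpace Submodule Set

theorem exists_lt_forall_le_of_tendsto {α : Type*} [LinearOrder α] [TopologicalSpace α]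
    [ClosedIciTopology α] {u : ℕ → α} {l c : α} (hu : Tendsto u atTop (𝓝 l)) (hl : l < c)
    (hlt : ∀ n, u n < c) : ∃ d < c, ∀ n, u n ≤ d := by
  obtain ⟨d, hd, hmax⟩ := hu.isCompact_insert_range.exists_isGreatest (insert_nonempty _ _)
  refine ⟨d, ?_, fun n => hmax (mem_insert_of_mem _ ⟨n, rfl⟩)⟩
  rcases hd with rfl | ⟨n, rfl⟩
  exacts [hl, hlt n]

theorem tendsto_zero_of_tendsto_neg_one_pow_mul {r : ℕ → ℝ} {L : ℝ} (hr : ∀ n, 0 ≤ r n)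
    (h : Tendsto (fun n => (-1) ^ n * r n) atTop (𝓝 L)) : Tendsto r atTop (𝓝 0) := by
  have hL : L = 0 := by
    have heven := h.comp (tendsto_atTop_mono (fun n => by omega : ∀ n, n ≤ 2 * n) tendsto_id)
    have hodd := h.comp (tendsto_atTop_mono (fun n => by omega : ∀ n, n ≤ 2 * n + 1) tendsto_id)
    refine le_antisymm (le_of_tendsto' hodd fun n => ?_) (ge_of_tendsto' heven fun n => ?_)
    · simp [pow_succ, pow_mul, hr]
    · simp [pow_mul, hr]
  simpa [hL, abs_mul, abs_of_nonneg (hr _)] using h.abs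

section

variable {ι X : Type*} [NormedAddCommGroup X] [NormedSpace ℝ X]

def HasLowerL1Estimate (u : ι → X) (C : ℝ) : Prop :=
  ∀ c : ι →₀ ℝ, C * (c.sum fun _ a => |a|) ≤ ‖Finsupp.linearCombination ℝ u c‖

variable {u : ι → X} {C : ℝ}

theorem HasLowerL1Estimate.linearIndependent (hC : 0 < C) (hu : HasLowerL1Estimate u C) :
    LinearIndependent ℝ u := by
  refine linearIndependent_iff.2 fun c hc => ?_
  have hsum : (c.sum fun _ a => |a|) = 0 := by
    have := hu c
    rw [hc, norm_zero] at this
    exact le_antisymm (nonpos_of_mul_nonpos_right this hC)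
      (Finset.sum_nonneg fun i _ => abs_nonneg _)
  ext i
  by_contra hi
  exact hi (abs_eq_zero.1 <| (Finset.sum_eq_zero_iff_of_nonneg fun j _ => abs_nonneg (c j)).1
    hsum i (Finsupp.mem_support_iff.2 hi))

theorem HasLowerL1Estimate.exists_dual_apply_eq (hC : 0 < C) (hu : HasLowerL1Estimate u C)
    {ε : ι → ℝ} (hε : ∀ i, |ε i| ≤ 1) : ∃ f : StrongDual ℝ X, ∀ i, f (u i) = ε i := by
  have hli := hu.linearIndependent hC
  let g : span ℝ (range u) →ₗ[ℝ] ℝ := (Finsupp.linearCombination ℝ ε).comp hli.repr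
  have hg : ∀ z, ‖g z‖ ≤ C⁻¹ * ‖z‖ := by
    intro z
    set c := hli.repr z
    have hz : ‖z‖ = ‖Finsupp.linearCombination ℝ u c‖ := by rw [hli.linearCombination_repr]; rfl
    calc ‖g z‖ = |c.sum fun i a => a * ε i| := by
          simp [g, c, Finsupp.linearCombination_apply]
      _ ≤ c.sum fun _ a => |a| := by
          refine (Finset.abs_sum_le_sum_abs _ _).trans (Finset.sum_le_sum fun i _ => ?_)
          rw [abs_mul]
          exact mul_le_of_le_one_right (abs_nonneg _) (hε i)
      _ ≤ C⁻¹ * ‖z‖ := by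
          rw [hz, le_inv_mul_iff₀ hC]
          exact hu c
  obtain ⟨f, hf, -⟩ := exists_extension_norm_eq _ (g.mkContinuous C⁻¹ hg)
  refine ⟨f, fun i => ?_⟩
  have hi : u i ∈ span ℝ (range u) := subset_span ⟨i, rfl⟩
  rw [show u i = ((⟨u i, hi⟩ : span ℝ (range u)) : X) from rfl, hf]
  simp [g, hli.repr_eq_single i ⟨u i, hi⟩ rfl]

theorem SpansL1Asy.exists_hasLowerL1Estimate {x : ℕ → X} (hx : SpansL1Asy x) :
    ∃ C > 0, HasLowerL1Estimate (fun n => normalize (x n)) C := by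
  obtain ⟨δ, hδ, hδ0, hest⟩ := hx
  obtain ⟨d, hd1, hδd⟩ := exists_lt_forall_le_of_tendsto hδ0 one_pos fun n => (hδ n).2
  refine ⟨1 - d, sub_pos.2 hd1, fun c => ?_⟩
  obtain ⟨m, hm⟩ := c.support.exists_nat_subset_range
  rw [Finsupp.linearCombination_apply, Finsupp.sum_of_support_subset c hm _ (by simp),
    Finsupp.sum_of_support_subset c hm _ (by simp), Finset.mul_sum]
  refine (Finset.sum_le_sum fun n _ => ?_).trans (hest m c).1
  exact mul_le_mul_of_nonneg_right (by linarith [hδd n]) (abs_nonneg _)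

theorem SpansL1Asy.tendsto_norm_zero_of_weak {z : ℕ → X} (hz : SpansL1Asy z) {w : X}
    (hw : ∀ f : StrongDual ℝ X, Tendsto (fun n => f (z n)) atTop (𝓝 (f w))) :
    Tendsto (fun n => ‖z n‖) atTop (𝓝 0) := by
  obtain ⟨C, hC, hlow⟩ := hz.exists_hasLowerL1Estimate
  obtain ⟨f, hf⟩ := hlow.exists_dual_apply_eq hC (ε := fun n => (-1) ^ n) (by simp)
  refine tendsto_zero_of_tendsto_neg_one_pow_mul (fun n => norm_nonneg _) (L := f w) ?_
  convert hw f using 2 with n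
  conv_rhs => rw [← norm_smul_normalize (z n)]
  rw [map_smul, hf, smul_eq_mul, mul_comm]

theorem eq_of_weak_tendsto_of_tendsto {ι : Type*} {l : Filter ι} [l.NeBot] {s : ι → X} {a b : X}
    (hw : ∀ f : StrongDual ℝ X, Tendsto (fun n => f (s n)) l (𝓝 (f a)))
    (h : Tendsto s l (𝓝 b)) : a = b :=
  SeparatingDual.eq_iff_forall_dual_eq.2 fun f =>
    tendsto_nhds_unique (hw f) ((f.continuous.tendsto b).comp h)

theorem AbstractMeasureTopology.exists_subseq_tendsto_zero (T : AbstractMeasureTopology X)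
    {y : ℕ → X} {w : X} (hτ : Tendsto y atTop (@nhds X T.τ 0))
    (hw : ∀ f : StrongDual ℝ X, Tendsto (fun n => f (y n)) atTop (𝓝 (f w))) :
    ∃ φ : ℕ → ℕ, StrictMono φ ∧ Tendsto (y ∘ φ) atTop (𝓝 0) := by
  obtain ⟨-, φ, hφ, hl1 | hnorm⟩ := T.null_structure y hτ
  · exact ⟨φ, hφ, tendsto_zero_iff_norm_tendsto_zero.2 <|
      hl1.tendsto_norm_zero_of_weak fun f => (hw f).comp hφ.tendsto_atTop⟩
  · exact ⟨φ, hφ, tendsto_zero_iff_norm_tendsto_zero.2 hnorm⟩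

end

theorem weak_and_measure_implies_norm_general {X : Type*} [NormedAddCommGroup X]
    [NormedSpace ℝ X]
    (T : AbstractMeasureTopology X) (s : ℕ → X) (a b : X)
    (hw : ∀ f : StrongDual ℝ X, Tendsto (fun n => f (s n)) atTop (𝓝 (f a)))
    (hτ : Tendsto s atTop (@nhds X T.τ b)) :
    a = b ∧ Tendsto s atTop (𝓝 a) := by
  have hsb : Tendsto s atTop (𝓝 b) := tendsto_of_subseq_tendsto fun ns hns => by
    have hw_sub (f : StrongDual ℝ X) :
        Tendsto (fun n => f (s (ns n) - b)) atTop (𝓝 (f (a - b))) := by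
      simpa only [map_sub, Function.comp_def] using ((hw f).sub_const (f b)).comp hns
    obtain ⟨ψ, -, hψ⟩ :=
      T.exists_subseq_tendsto_zero (((T.translation s b).1 hτ).comp hns) hw_sub
    exact ⟨ψ, by simpa using hψ.add_const b⟩
  obtain rfl := eq_of_weak_tendsto_of_tendsto hw hsb
  exact ⟨rfl, hsb⟩

/-- If a sequence converges both weakly and in the abstract measure topology,
then it converges in norm and all limits coincide. -/
theorem weak_and_measure_implies_norm {X : Type*} [NormedAddCommGroup X]
    [NormedSpace ℝ X] [CompleteSpace X]
    (T : AbstractMeasureTopology X) (s : ℕ → X) (a b : X)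
    (hw : ∀ f : StrongDual ℝ X, Tendsto (fun n => f (s n)) atTop (𝓝 (f a)))
    (hτ : Tendsto s atTop (@nhds X T.τ b)) :
    a = b ∧ Tendsto s atTop (𝓝 a) :=
  weak_and_measure_implies_norm_general T s a b hw hτ
end
end

section
/- A Banach space X has property (m₁) if and only if X has the Schur property. (Property (m₁): for every x ∈ X and every weakly null sequence (x_n), limsup ‖x + x_n‖ = ‖x‖ + limsup ‖x_n‖.) -/
/-!
Schur implies (m₁) because weakly null sequences are then norm null. Conversely, let `t` be
weakly null with `c = limsup ‖t n‖ > 0`. Property (m₁) lets us pick a subsequence `y j` with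
`‖y j‖ ≤ c + δⱼ` and `‖y 0 + ⋯ + y j‖ ≥ ‖y 0 + ⋯ + y (j-1)‖ + c - δⱼ`, where `∑ δⱼ ≤ c / 4`.
A norming functional of `y 0 + ⋯ + y (k-1)` then has to be at least `c / 2` on each `y j`, `j < k`,
and a weak-* cluster point of these functionals (Banach–Alaoglu) is a functional that is
at least `c / 2` on the whole subsequence, contradicting weak nullity.
-/

open Filter Topology Finset

theorem exists_strictMono_forall_partialSum {M : Type*} [AddCommMonoid M] (t : ℕ → M)
    (Q : ℕ → M → M → Prop) (h : ∀ j m v, ∃ n, m ≤ n ∧ Q j v (t n)) :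
    ∃ N : ℕ → ℕ, StrictMono N ∧ ∀ j, Q j (∑ i ∈ range j, t (N i)) (t (N j)) := by
  choose pick hle hQ using h
  -- the state after `j` steps: a lower bound for the next index, and the partial sum so far
  let g : ℕ → ℕ × M := fun j =>
    Nat.rec (0, 0) (fun j p => (pick j p.1 p.2 + 1, p.2 + t (pick j p.1 p.2))) j
  let N : ℕ → ℕ := fun j => pick j (g j).1 (g j).2
  have hg : ∀ j, (g j).2 = ∑ i ∈ range j, t (N i) := by
    intro j
    induction j with
    | zero => rfl
    | succ j ih => rw [sum_range_succ, ← ih]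
  exact ⟨N, strictMono_nat_of_lt_succ fun j => hle _ _ _, fun j => hg j ▸ hQ _ _ _⟩

theorem Real.exists_ge_lt_limsup_add_and_limsup_sub_lt {a b : ℕ → ℝ}
    (ha : IsBoundedUnder (· ≤ ·) atTop a) (hb : IsCoboundedUnder (· ≤ ·) atTop b)
    {δ : ℝ} (hδ : 0 < δ) (m : ℕ) :
    ∃ n, m ≤ n ∧ a n < limsup a atTop + δ ∧ limsup b atTop - δ < b n := by
  have hb' : ∃ᶠ n in atTop, limsup b atTop - δ < b n :=
    frequently_lt_of_lt_limsup hb (sub_lt_self _ hδ)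
  obtain ⟨n, hbn, han, hmn⟩ :=
    (hb'.and_eventually ((eventually_lt_of_limsup_lt (lt_add_of_pos_right _ hδ) ha).and
      (eventually_ge_atTop m))).exists
  exact ⟨n, hmn, han, hbn⟩

section

variable {X : Type*} [NormedAddCommGroup X] [NormedSpace ℝ X]

theorem exists_norm_le_of_weaklyNull {u : ℕ → X}
    (hu : ∀ f : StrongDual ℝ X, Tendsto (fun n => f (u n)) atTop (𝓝 0)) :
    ∃ C, ∀ n, ‖u n‖ ≤ C := by
  obtain ⟨C, hC⟩ := banach_steinhaus (g := fun n => NormedSpace.inclusionInDoubleDual ℝ X (u n))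
    fun f => by
      obtain ⟨C, hC⟩ := (hu f).norm.bddAbove_range
      exact ⟨C, fun n => by simpa using hC ⟨n, rfl⟩⟩
  exact ⟨C, fun n => (NormedSpace.inclusionInDoubleDualLi ℝ).norm_map (u n) ▸ hC n⟩

theorem sub_two_mul_sum_le_apply_of_le_norm_sum {ι : Type*} {s : Finset ι} {y : ι → X}
    {c : ℝ} {D : ι → ℝ} (hD : ∀ i, 0 ≤ D i) (hy : ∀ i ∈ s, ‖y i‖ ≤ c + D i)
    (hsum : ∑ i ∈ s, (c - D i) ≤ ‖∑ i ∈ s, y i‖) {F : StrongDual ℝ X} (hF : ‖F‖ ≤ 1)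
    (hFsum : F (∑ i ∈ s, y i) = ‖∑ i ∈ s, y i‖) {j : ι} (hj : j ∈ s) :
    c - 2 * ∑ i ∈ s, D i ≤ F (y j) := by
  classical
  have hFy : ∀ i ∈ s, F (y i) ≤ c + D i := fun i hi =>
    calc F (y i) ≤ ‖F (y i)‖ := Real.le_norm_self _
      _ ≤ ‖F‖ * ‖y i‖ := F.le_opNorm _
      _ ≤ ‖y i‖ := mul_le_of_le_one_left (norm_nonneg _) hF
      _ ≤ c + D i := hy i hi
  have hrest : ∑ i ∈ s.erase j, F (y i) ≤ ∑ i ∈ s.erase j, (c + D i) :=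
    sum_le_sum fun i hi => hFy i (mem_of_mem_erase hi)
  rw [map_sum] at hFsum
  rw [← add_sum_erase s _ hj] at hFsum hsum ⊢
  rw [sum_sub_distrib] at hsum
  rw [sum_add_distrib] at hrest
  linarith [hD j]

theorem exists_not_tendsto_zero_of_forall_exists_le_apply {u : ℕ → X} {ε : ℝ} (hε : 0 < ε)
    (h : ∀ k, ∃ F : StrongDual ℝ X, ‖F‖ ≤ 1 ∧ ∀ j < k, ε ≤ F (u j)) :
    ∃ f : StrongDual ℝ X, ¬ Tendsto (fun n => f (u n)) atTop (𝓝 0) := by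
  choose F hF hFu using h
  obtain ⟨φ, -, hφ⟩ := (WeakDual.isCompact_closedBall (𝕜 := ℝ) (E := X) 0 1).exists_mapClusterPt
    (f := atTop) (u := fun k => StrongDual.toWeakDual (F k))
    (le_principal_iff.2 <| mem_map.2 <| Eventually.of_forall fun k => by simpa using hF k)
  have hφu : ∀ j, ε ≤ φ (u j) := fun j =>
    (isClosed_le continuous_const (WeakDual.eval_continuous (u j))).mem_of_mapClusterPt hφ
      ((eventually_gt_atTop j).mono fun k hk => hFu k j hk)
  exact ⟨WeakDual.toStrongDual φ, fun hlim =>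
    hε.not_ge (ge_of_tendsto' hlim hφu)⟩

theorem exists_strictMono_forall_exists_le_apply {t : ℕ → X} {c : ℝ} (hc : 0 < c)
    (hnext : ∀ (v : X) {δ : ℝ}, 0 < δ → ∀ m,
      ∃ n, m ≤ n ∧ ‖t n‖ ≤ c + δ ∧ ‖v‖ + c - δ ≤ ‖v + t n‖) :
    ∃ N : ℕ → ℕ, StrictMono N ∧
      ∀ k, ∃ F : StrongDual ℝ X, ‖F‖ ≤ 1 ∧ ∀ j < k, c / 2 ≤ F (t (N j)) := by
  set D : ℕ → ℝ := fun j => c / 8 * (1 / 2) ^ j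
  have hD : ∀ j, 0 ≤ D j := fun j => by positivity
  have hDsum : ∀ k, ∑ j ∈ range k, D j ≤ c / 4 := fun k => by
    rw [← mul_sum]
    nlinarith [sum_geometric_two_le k]
  obtain ⟨N, hN, hNj⟩ := exists_strictMono_forall_partialSum t
    (fun j v x => ‖x‖ ≤ c + D j ∧ ‖v‖ + c - D j ≤ ‖v + x‖)
    fun j m v => hnext v (by positivity) m
  have hlow : ∀ k, ∑ j ∈ range k, (c - D j) ≤ ‖∑ j ∈ range k, t (N j)‖ := by
    intro k
    induction k with
    | zero => simp
    | succ k ih =>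
      rw [sum_range_succ, sum_range_succ]
      linarith [(hNj k).2]
  refine ⟨N, hN, fun k => ?_⟩
  obtain ⟨F, hF, hFsum⟩ := exists_dual_vector'' ℝ (∑ j ∈ range k, t (N j))
  refine ⟨F, hF, fun j hj => ?_⟩
  have := sub_two_mul_sum_le_apply_of_le_norm_sum hD (fun i _ => (hNj i).1) (hlow k) hF hFsum
    (mem_range.2 hj)
  linarith [hDsum k]

theorem tendsto_zero_of_weaklyNull_of_limsup_norm_add_eq
    (hm1 : ∀ (v : X) (s : ℕ → X),
      (∀ f : StrongDual ℝ X, Tendsto (fun n => f (s n)) atTop (𝓝 0)) →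
      limsup (fun n => ‖v + s n‖) atTop = ‖v‖ + limsup (fun n => ‖s n‖) atTop)
    {t : ℕ → X} (ht : ∀ f : StrongDual ℝ X, Tendsto (fun n => f (t n)) atTop (𝓝 0)) :
    Tendsto t atTop (𝓝 0) := by
  obtain ⟨C, hC⟩ := exists_norm_le_of_weaklyNull ht
  have hbdd : IsBoundedUnder (· ≤ ·) atTop (fun n => ‖t n‖) := isBoundedUnder_of ⟨C, hC⟩
  have hbdd₀ (u : ℕ → X) : IsBoundedUnder (· ≥ ·) atTop (fun n => ‖u n‖) :=
    isBoundedUnder_of ⟨0, fun n => norm_nonneg _⟩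
  set c := limsup (fun n => ‖t n‖) atTop
  refine tendsto_zero_iff_norm_tendsto_zero.2 <| tendsto_of_le_liminf_of_limsup_le
    (le_liminf_of_le hbdd.isCoboundedUnder_ge (.of_forall fun n => norm_nonneg _))
    (not_lt.1 fun hc => ?_) hbdd (hbdd₀ t)
  have hnext (v : X) {δ : ℝ} (hδ : 0 < δ) (m : ℕ) :
      ∃ n, m ≤ n ∧ ‖t n‖ ≤ c + δ ∧ ‖v‖ + c - δ ≤ ‖v + t n‖ := by
    obtain ⟨n, hmn, hn, hvn⟩ := Real.exists_ge_lt_limsup_add_and_limsup_sub_lt hbdd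
      (hbdd₀ (v + t ·)).isCoboundedUnder_le hδ m
    rw [hm1 v t ht] at hvn
    exact ⟨n, hmn, hn.le, hvn.le⟩
  obtain ⟨N, hN, hF⟩ := exists_strictMono_forall_exists_le_apply hc hnext
  obtain ⟨f, hf⟩ := exists_not_tendsto_zero_of_forall_exists_le_apply (half_pos hc) hF
  exact hf ((ht f).comp hN.tendsto_atTop)

end

theorem property_m1_iff_schur_general {X : Type*} [NormedAddCommGroup X] [NormedSpace ℝ X] :
    (∀ (v : X) (s : ℕ → X),
        (∀ f : StrongDual ℝ X, Tendsto (fun n => f (s n)) atTop (𝓝 0)) →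
        Filter.limsup (fun n => ‖v + s n‖) atTop =
          ‖v‖ + Filter.limsup (fun n => ‖s n‖) atTop) ↔
      ∀ (s : ℕ → X) (v : X),
        (∀ f : StrongDual ℝ X, Tendsto (fun n => f (s n)) atTop (𝓝 (f v))) →
        Tendsto s atTop (𝓝 v) := by
  constructor
  · intro hm1 s v hs
    have hnull := tendsto_zero_of_weaklyNull_of_limsup_norm_add_eq hm1 (t := (s · - v))
      fun f => by simpa using (hs f).sub_const (f v)
    simpa using hnull.add_const v
  · intro hschur v s hs
    have hs₀ : Tendsto s atTop (𝓝 0) := hschur s 0 (by simpa using hs)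
    have hnorm : Tendsto (fun n => ‖s n‖) atTop (𝓝 0) := by simpa using hs₀.norm
    have hnorm_add : Tendsto (fun n => ‖v + s n‖) atTop (𝓝 ‖v‖) := by
      simpa using (hs₀.const_add v).norm
    rw [hnorm_add.limsup_eq, hnorm.limsup_eq, add_zero]

/-- A Banach space has property (m₁) iff it has the Schur property. -/
theorem property_m1_iff_schur {X : Type*} [NormedAddCommGroup X] [NormedSpace ℝ X]
    [CompleteSpace X] :
    (∀ (v : X) (s : ℕ → X),
        (∀ f : StrongDual ℝ X, Tendsto (fun n => f (s n)) atTop (𝓝 0)) →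
        Filter.limsup (fun n => ‖v + s n‖) atTop =
          ‖v‖ + Filter.limsup (fun n => ‖s n‖) atTop) ↔
      ∀ (s : ℕ → X) (v : X),
        (∀ f : StrongDual ℝ X, Tendsto (fun n => f (s n)) atTop (𝓝 (f v))) →
        Tendsto s atTop (𝓝 v) :=
  property_m1_iff_schur_general
end
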